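/- arXiv:1310.0349 — 10 statements merged into one kernel-verified Lean document; each statement's English description precedes it below -/
import Mathlib

section
/- Let I be an infinite interval and λ ∈ Λ_{I;n,c}. Suppose J and J' are finite subintervals of I such that |J_+| ≥ 2·max(n_1,…,n_l), |J'_+| ≥ 2·max(n_1,…,n_l), and λ_{ij} = c_i for all 1 ≤ i ≤ l and all j ∈ I_+ outside J_+ (respectively outside J'_+). Then Σ_{j∈J_+} (k_j² − l_j²) = Σ_{j∈J'_+} (k'_j² − l_j²), where for j ∈ J_+ one sets l_j := #{i : λ_{ij} = 1} and k_j := #{i : (κ_{J;n,c})_{ij} = 1}, and similarly k'_j, l_j for J'. (This common value is twice the defect def(λ).) -/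
lemma char_dec (a b : ℤ) (p : ℤ → Bool)
    (hdec : ∀ j ∈ Finset.Icc a (b+1), ∀ j' ∈ Finset.Icc a (b+1),
      j ≤ j' → p j' = true → p j = true)
    (j : ℤ) (hj : j ∈ Finset.Icc a (b+1)) :
    p j = true ↔ j < a + (((Finset.Icc a (b+1)).filter (fun x => p x = true)).card : ℤ) := by
  simp only [Finset.mem_Icc] at hj
  constructor
  · intro hp
    have hsub : Finset.Icc a j ⊆ (Finset.Icc a (b+1)).filter (fun x => p x = true) := by
      intro x hx
      simp only [Finset.mem_Icc] at hx
      simp only [Finset.mem_filter, Finset.mem_Icc]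
      refine ⟨⟨hx.1, hx.2.trans hj.2⟩, hdec x ?_ j ?_ hx.2 hp⟩
      · simp only [Finset.mem_Icc]; exact ⟨hx.1, hx.2.trans hj.2⟩
      · simp only [Finset.mem_Icc]; exact hj
    have h1 : ((Finset.Icc a j).card : ℤ) ≤
        (((Finset.Icc a (b+1)).filter (fun x => p x = true)).card : ℤ) := by
      exact_mod_cast Finset.card_le_card hsub
    have h2 : ((Finset.Icc a j).card : ℤ) = j + 1 - a := by
      rw [Int.card_Icc, Int.toNat_of_nonneg (by omega)]
    omega
  · intro hlt
    by_contra hp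
    have hsub : (Finset.Icc a (b+1)).filter (fun x => p x = true) ⊆ Finset.Icc a (j-1) := by
      intro x hx
      simp only [Finset.mem_filter, Finset.mem_Icc] at hx
      simp only [Finset.mem_Icc]
      refine ⟨hx.1.1, ?_⟩
      by_contra hxj
      exact hp (hdec j (by simp only [Finset.mem_Icc]; exact hj) x
        (by simp only [Finset.mem_Icc]; exact hx.1) (by omega) hx.2)
    have h1 : (((Finset.Icc a (b+1)).filter (fun x => p x = true)).card : ℤ) ≤
        ((Finset.Icc a (j-1)).card : ℤ) := by exact_mod_cast Finset.card_le_card hsub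
    have h2 : ((Finset.Icc a (j-1)).card : ℤ) ≤ j - a := by
      rw [Int.card_Icc]
      omega
    omega

lemma row_char (a b : ℤ) (hab : a ≤ b) (nv : ℕ) (cv : Bool) (p : ℤ → Bool)
    (hmem : ((Finset.Icc a (b+1)).filter (fun x => p x ≠ cv)).card = nv)
    (hdec : ∀ j ∈ Finset.Icc a (b+1), ∀ j' ∈ Finset.Icc a (b+1),
      j ≤ j' → p j' = true → p j = true)
    (j : ℤ) (hj : j ∈ Finset.Icc a (b+1)) :
    p j = true ↔ ((cv = false ∧ j < a + (nv : ℤ)) ∨ (cv = true ∧ j < b + 2 - (nv : ℤ))) := by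
  have hchar := char_dec a b p hdec j hj
  cases cv with
  | false =>
    have heq : (Finset.Icc a (b+1)).filter (fun x => p x = true)
        = (Finset.Icc a (b+1)).filter (fun x => p x ≠ false) := by
      apply Finset.filter_congr
      intro x _
      simp
    rw [heq, hmem] at hchar
    rw [hchar]; simp
  | true =>
    have hadd := Finset.card_filter_add_card_filter_not
      (s := Finset.Icc a (b+1)) (p := fun x => p x = true)
    have heq : (Finset.Icc a (b+1)).filter (fun x => ¬ (p x = true))
        = (Finset.Icc a (b+1)).filter (fun x => p x ≠ true) := by
      apply Finset.filter_congr; intro x _; simp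
    rw [heq, hmem] at hadd
    have hcard : ((Finset.Icc a (b+1)).card : ℤ) = b + 2 - a := by
      rw [Int.card_Icc]; omega
    have hT : (((Finset.Icc a (b+1)).filter (fun x => p x = true)).card : ℤ)
        = b + 2 - a - nv := by
      have : (((Finset.Icc a (b+1)).filter (fun x => p x = true)).card : ℤ) + nv
          = ((Finset.Icc a (b+1)).card : ℤ) := by exact_mod_cast hadd
      omega
    rw [hT] at hchar
    rw [hchar]; constructor
    · intro h; exact Or.inr ⟨rfl, by omega⟩
    · rintro (⟨h, -⟩ | ⟨-, h⟩)
      · exact absurd h (by simp)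
      · omega

lemma kappa_sum (l : ℕ) (n : Fin l → ℕ) (c : Fin l → Bool) (a b : ℤ) (hab : a ≤ b)
    (hbig : 2 * ((Finset.univ.sup n : ℕ) : ℤ) ≤ b - a + 2)
    (κ : Fin l → ℤ → Bool)
    (hmem : ∀ i, ((Finset.Icc a (b + 1)).filter (fun j => κ i j ≠ c i)).card = n i)
    (hdec : ∀ i, ∀ j ∈ Finset.Icc a (b + 1), ∀ j' ∈ Finset.Icc a (b + 1),
      j ≤ j' → κ i j' = true → κ i j = true) :
    ∑ j ∈ Finset.Icc a (b + 1),
      ((((Finset.univ.filter (fun i : Fin l => κ i j = true)).card : ℤ)) ^ 2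
        - (((Finset.univ.filter (fun i : Fin l => c i = true)).card : ℤ)) ^ 2)
    = (∑ d ∈ Finset.Ico (0:ℤ) ((Finset.univ.sup n : ℕ) : ℤ),
        (((((Finset.univ.filter (fun i : Fin l => c i = false ∧ d < (n i : ℤ))).card : ℤ)
           + ((Finset.univ.filter (fun i : Fin l => c i = true)).card : ℤ)) ^ 2)
          - (((Finset.univ.filter (fun i : Fin l => c i = true)).card : ℤ)) ^ 2))
      + (∑ d ∈ Finset.Ico (0:ℤ) ((Finset.univ.sup n : ℕ) : ℤ),
        ((((Finset.univ.filter (fun i : Fin l => c i = true ∧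
              (n i : ℤ) < ((Finset.univ.sup n : ℕ) : ℤ) - d)).card : ℤ)) ^ 2
          - (((Finset.univ.filter (fun i : Fin l => c i = true)).card : ℤ)) ^ 2)) := by
  set N : ℤ := ((Finset.univ.sup n : ℕ) : ℤ) with hN
  have hN0 : 0 ≤ N := Int.ofNat_nonneg _
  have hni : ∀ i : Fin l, (n i : ℤ) ≤ N := fun i => by
    rw [hN]
    exact_mod_cast Finset.le_sup (f := n) (Finset.mem_univ i)
  set m : ℕ := (Finset.univ.filter (fun i : Fin l => c i = true)).card with hm
  -- step 1 : rewrite each k_j via the explicit description of κ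
  have key : ∀ j ∈ Finset.Icc a (b + 1),
      (Finset.univ.filter (fun i : Fin l => κ i j = true)).card
      = (Finset.univ.filter (fun i : Fin l =>
          (c i = false ∧ j < a + (n i : ℤ)) ∨ (c i = true ∧ j < b + 2 - (n i : ℤ)))).card := by
    intro j hj
    congr 1
    apply Finset.filter_congr
    intro i _
    exact row_char a b hab (n i) (c i) (κ i) (hmem i) (hdec i) j hj
  rw [Finset.sum_congr rfl (fun j hj => by rw [key j hj])]
  -- step 2 : split the interval
  have hIccIco : Finset.Icc a (b + 1) = Finset.Ico a (b + 2) := by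
    ext x
    simp only [Finset.mem_Icc, Finset.mem_Ico]
    omega
  rw [hIccIco]
  set f : ℤ → ℤ := fun j =>
    (((Finset.univ.filter (fun i : Fin l =>
        (c i = false ∧ j < a + (n i : ℤ)) ∨ (c i = true ∧ j < b + 2 - (n i : ℤ)))).card : ℤ)) ^ 2
      - (m : ℤ) ^ 2 with hf
  have h1 : a ≤ a + N := by omega
  have h2 : a + N ≤ b + 2 - N := by omega
  have h3 : b + 2 - N ≤ b + 2 := by omega
  rw [show Finset.Ico a (b + 2) = Finset.Ico a (a + N) ∪ Finset.Ico (a + N) (b + 2) from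
        (Finset.Ico_union_Ico_eq_Ico h1 (le_trans h2 h3)).symm,
      Finset.sum_union (Finset.Ico_disjoint_Ico_consecutive a (a + N) (b + 2)),
      show Finset.Ico (a + N) (b + 2)
          = Finset.Ico (a + N) (b + 2 - N) ∪ Finset.Ico (b + 2 - N) (b + 2) from
        (Finset.Ico_union_Ico_eq_Ico h2 h3).symm,
      Finset.sum_union (Finset.Ico_disjoint_Ico_consecutive (a + N) (b + 2 - N) (b + 2))]
  -- middle is zero
  have hmid : ∑ j ∈ Finset.Ico (a + N) (b + 2 - N), f j = 0 := by
    apply Finset.sum_eq_zero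
    intro j hj
    simp only [Finset.mem_Ico] at hj
    have : (Finset.univ.filter (fun i : Fin l =>
        (c i = false ∧ j < a + (n i : ℤ)) ∨ (c i = true ∧ j < b + 2 - (n i : ℤ))))
        = Finset.univ.filter (fun i : Fin l => c i = true) := by
      apply Finset.filter_congr
      intro i _
      have := hni i
      constructor
      · rintro (⟨hc, hlt⟩ | ⟨hc, -⟩)
        · omega
        · exact hc
      · intro hc
        exact Or.inr ⟨hc, by omega⟩
    simp only [hf, this, ← hm]
    ring
  -- left part
  have hleft : ∑ j ∈ Finset.Ico a (a + N), f j
      = ∑ d ∈ Finset.Ico (0:ℤ) N,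
        ((((Finset.univ.filter (fun i : Fin l => c i = false ∧ d < (n i : ℤ))).card : ℤ)
           + (m : ℤ)) ^ 2 - (m : ℤ) ^ 2) := by
    have hmap : Finset.Ico a (a + N) = Finset.map (addLeftEmbedding a) (Finset.Ico (0:ℤ) N) := by
      rw [Finset.map_add_left_Ico]
      simp
    rw [hmap, Finset.sum_map]
    apply Finset.sum_congr rfl
    intro d hd
    simp only [Finset.mem_Ico] at hd
    have hemb : addLeftEmbedding a d = a + d := rfl
    rw [hemb]
    simp only [hf]
    have hset : (Finset.univ.filter (fun i : Fin l =>
        (c i = false ∧ a + d < a + (n i : ℤ)) ∨ (c i = true ∧ a + d < b + 2 - (n i : ℤ))))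
        = Finset.univ.filter (fun i : Fin l =>
            (c i = false ∧ d < (n i : ℤ)) ∨ c i = true) := by
      apply Finset.filter_congr
      intro i _
      have := hni i
      constructor
      · rintro (⟨hc, hlt⟩ | ⟨hc, -⟩)
        · exact Or.inl ⟨hc, by omega⟩
        · exact Or.inr hc
      · rintro (⟨hc, hlt⟩ | hc)
        · exact Or.inl ⟨hc, by omega⟩
        · exact Or.inr ⟨hc, by omega⟩
    rw [hset]
    have hsplit : Finset.univ.filter (fun i : Fin l =>
        (c i = false ∧ d < (n i : ℤ)) ∨ c i = true)
        = (Finset.univ.filter (fun i : Fin l => c i = false ∧ d < (n i : ℤ)))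
          ∪ (Finset.univ.filter (fun i : Fin l => c i = true)) := by
      rw [Finset.filter_or]
    have hdisj : Disjoint (Finset.univ.filter (fun i : Fin l => c i = false ∧ d < (n i : ℤ)))
        (Finset.univ.filter (fun i : Fin l => c i = true)) := by
      rw [Finset.disjoint_filter]
      rintro i - ⟨hc, -⟩
      simp [hc]
    rw [hsplit, Finset.card_union_of_disjoint hdisj, hm]
    push_cast
    ring
  -- right part
  have hright : ∑ j ∈ Finset.Ico (b + 2 - N) (b + 2), f j
      = ∑ d ∈ Finset.Ico (0:ℤ) N,
        ((((Finset.univ.filter (fun i : Fin l => c i = true ∧ (n i : ℤ) < N - d)).card : ℤ)) ^ 2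
          - (m : ℤ) ^ 2) := by
    have hmap : Finset.Ico (b + 2 - N) (b + 2)
        = Finset.map (addLeftEmbedding (b + 2 - N)) (Finset.Ico (0:ℤ) N) := by
      rw [Finset.map_add_left_Ico]
      congr 1 <;> ring
    rw [hmap, Finset.sum_map]
    apply Finset.sum_congr rfl
    intro d hd
    simp only [Finset.mem_Ico] at hd
    have hemb : addLeftEmbedding (b + 2 - N) d = b + 2 - N + d := rfl
    rw [hemb]
    simp only [hf]
    have hset : (Finset.univ.filter (fun i : Fin l =>
        (c i = false ∧ b + 2 - N + d < a + (n i : ℤ))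
          ∨ (c i = true ∧ b + 2 - N + d < b + 2 - (n i : ℤ))))
        = Finset.univ.filter (fun i : Fin l => c i = true ∧ (n i : ℤ) < N - d) := by
      apply Finset.filter_congr
      intro i _
      have := hni i
      constructor
      · rintro (⟨hc, hlt⟩ | ⟨hc, hlt⟩)
        · omega
        · exact ⟨hc, by omega⟩
      · rintro ⟨hc, hlt⟩
        exact Or.inr ⟨hc, by omega⟩
    rw [hset]
  rw [hmid, hleft, hright]
  ring

/-- For an infinite interval `I` and `λ ∈ Λ_{I;n,c}`, the quantity
`Σ_{j∈J₊} (k_j² − l_j²)` (twice the defect) is independent of the choice of a finite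
subinterval `J ⊆ I` with `|J₊| ≥ 2·max(n)` containing all columns where `λ` differs from `c`. -/
theorem stmt_1
    (l : ℕ) (hl : 1 ≤ l) (n : Fin l → ℕ) (c : Fin l → Bool)
    (I : Set ℤ) (hIconn : I.OrdConnected) (hIinf : I.Infinite)
    (Iplus : Set ℤ) (hIplus : Iplus = I ∪ (fun x => x + 1) '' I)
    (lam : Fin l → ℤ → Bool)
    (hlam : ∀ i : Fin l, {j : ℤ | j ∈ Iplus ∧ lam i j ≠ c i}.Finite ∧
      {j : ℤ | j ∈ Iplus ∧ lam i j ≠ c i}.ncard = n i)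
    -- the finite subinterval J = [aJ, bJ]
    (aJ bJ : ℤ) (hJle : aJ ≤ bJ) (hJI : Set.Icc aJ bJ ⊆ I)
    (hJbig : 2 * ((Finset.univ.sup n : ℕ) : ℤ) ≤ bJ - aJ + 2)
    (hJsupp : ∀ i : Fin l, ∀ j ∈ Iplus, j ∉ Set.Icc aJ (bJ + 1) → lam i j = c i)
    -- the finite subinterval J' = [aK, bK]
    (aK bK : ℤ) (hKle : aK ≤ bK) (hKI : Set.Icc aK bK ⊆ I)
    (hKbig : 2 * ((Finset.univ.sup n : ℕ) : ℤ) ≤ bK - aK + 2)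
    (hKsupp : ∀ i : Fin l, ∀ j ∈ Iplus, j ∉ Set.Icc aK (bK + 1) → lam i j = c i)
    -- κ_{J;n,c} : the element of Λ_{J;n,c} with weakly decreasing rows
    (κJ : Fin l → ℤ → Bool)
    (hκJmem : ∀ i, ((Finset.Icc aJ (bJ + 1)).filter (fun j => κJ i j ≠ c i)).card = n i)
    (hκJdec : ∀ i, ∀ j ∈ Finset.Icc aJ (bJ + 1), ∀ j' ∈ Finset.Icc aJ (bJ + 1),
      j ≤ j' → κJ i j' = true → κJ i j = true)
    -- κ_{J';n,c}
    (κK : Fin l → ℤ → Bool)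
    (hκKmem : ∀ i, ((Finset.Icc aK (bK + 1)).filter (fun j => κK i j ≠ c i)).card = n i)
    (hκKdec : ∀ i, ∀ j ∈ Finset.Icc aK (bK + 1), ∀ j' ∈ Finset.Icc aK (bK + 1),
      j ≤ j' → κK i j' = true → κK i j = true) :
    ∑ j ∈ Finset.Icc aJ (bJ + 1),
        ((((Finset.univ.filter (fun i : Fin l => κJ i j = true)).card : ℤ) ^ 2)
          - (((Finset.univ.filter (fun i : Fin l => lam i j = true)).card : ℤ) ^ 2))
      = ∑ j ∈ Finset.Icc aK (bK + 1),
        ((((Finset.univ.filter (fun i : Fin l => κK i j = true)).card : ℤ) ^ 2)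
          - (((Finset.univ.filter (fun i : Fin l => lam i j = true)).card : ℤ) ^ 2)) := by
  classical
  have haJ : aJ ∈ I := hJI ⟨le_refl _, hJle⟩
  have hbJ : bJ ∈ I := hJI ⟨hJle, le_refl _⟩
  have haK : aK ∈ I := hKI ⟨le_refl _, hKle⟩
  have hbK : bK ∈ I := hKI ⟨hKle, le_refl _⟩
  have hAI : min aJ aK ∈ I := by
    rcases min_choice aJ aK with h | h <;> rw [h]
    · exact haJ
    · exact haK
  have hBI : max bJ bK ∈ I := by
    rcases max_choice bJ bK with h | h <;> rw [h]
    · exact hbJ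
    · exact hbK
  have hbig_sub : ∀ x ∈ Finset.Icc (min aJ aK) (max bJ bK + 1), x ∈ Iplus := by
    intro x hx
    simp only [Finset.mem_Icc] at hx
    rw [hIplus]
    by_cases hxB : x ≤ max bJ bK
    · exact Or.inl (hIconn.out hAI hBI ⟨hx.1, hxB⟩)
    · exact Or.inr ⟨max bJ bK, hBI, show max bJ bK + 1 = x by omega⟩
  -- λ column counts are m outside J₊ resp. K₊
  have hlamJ : ∀ j ∈ Finset.Icc (min aJ aK) (max bJ bK + 1), j ∉ Finset.Icc aJ (bJ + 1) →
      (Finset.univ.filter (fun i : Fin l => lam i j = true)).card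
        = (Finset.univ.filter (fun i : Fin l => c i = true)).card := by
    intro j hj hj'
    have hc : ∀ i : Fin l, lam i j = c i := by
      intro i
      apply hJsupp i j (hbig_sub j hj)
      simp only [Finset.mem_Icc] at hj'
      simp only [Set.mem_Icc]
      omega
    congr 1
    apply Finset.filter_congr
    intro i _
    rw [hc i]
  have hlamK : ∀ j ∈ Finset.Icc (min aJ aK) (max bJ bK + 1), j ∉ Finset.Icc aK (bK + 1) →
      (Finset.univ.filter (fun i : Fin l => lam i j = true)).card
        = (Finset.univ.filter (fun i : Fin l => c i = true)).card := by
    intro j hj hj'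
    have hc : ∀ i : Fin l, lam i j = c i := by
      intro i
      apply hKsupp i j (hbig_sub j hj)
      simp only [Finset.mem_Icc] at hj'
      simp only [Set.mem_Icc]
      omega
    congr 1
    apply Finset.filter_congr
    intro i _
    rw [hc i]
  -- extend the λ sums to the big interval
  have hsubJ : Finset.Icc aJ (bJ + 1) ⊆ Finset.Icc (min aJ aK) (max bJ bK + 1) :=
    Finset.Icc_subset_Icc (min_le_left _ _) (by have := le_max_left bJ bK; omega)
  have hsubK : Finset.Icc aK (bK + 1) ⊆ Finset.Icc (min aJ aK) (max bJ bK + 1) :=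
    Finset.Icc_subset_Icc (min_le_right _ _) (by have := le_max_right bJ bK; omega)
  have hJext : ∑ j ∈ Finset.Icc aJ (bJ + 1),
        ((((Finset.univ.filter (fun i : Fin l => lam i j = true)).card : ℤ)) ^ 2
          - (((Finset.univ.filter (fun i : Fin l => c i = true)).card : ℤ)) ^ 2)
      = ∑ j ∈ Finset.Icc (min aJ aK) (max bJ bK + 1),
        ((((Finset.univ.filter (fun i : Fin l => lam i j = true)).card : ℤ)) ^ 2
          - (((Finset.univ.filter (fun i : Fin l => c i = true)).card : ℤ)) ^ 2) := by
    apply Finset.sum_subset hsubJ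
    intro j hj hj'
    rw [hlamJ j hj hj']
    ring
  have hKext : ∑ j ∈ Finset.Icc aK (bK + 1),
        ((((Finset.univ.filter (fun i : Fin l => lam i j = true)).card : ℤ)) ^ 2
          - (((Finset.univ.filter (fun i : Fin l => c i = true)).card : ℤ)) ^ 2)
      = ∑ j ∈ Finset.Icc (min aJ aK) (max bJ bK + 1),
        ((((Finset.univ.filter (fun i : Fin l => lam i j = true)).card : ℤ)) ^ 2
          - (((Finset.univ.filter (fun i : Fin l => c i = true)).card : ℤ)) ^ 2) := by
    apply Finset.sum_subset hsubK
    intro j hj hj'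
    rw [hlamK j hj hj']
    ring
  -- split each side as (κ-part) − (λ-part)
  have hL : ∑ j ∈ Finset.Icc aJ (bJ + 1),
        ((((Finset.univ.filter (fun i : Fin l => κJ i j = true)).card : ℤ) ^ 2)
          - (((Finset.univ.filter (fun i : Fin l => lam i j = true)).card : ℤ) ^ 2))
      = (∑ j ∈ Finset.Icc aJ (bJ + 1),
          ((((Finset.univ.filter (fun i : Fin l => κJ i j = true)).card : ℤ)) ^ 2
            - (((Finset.univ.filter (fun i : Fin l => c i = true)).card : ℤ)) ^ 2))
        - (∑ j ∈ Finset.Icc aJ (bJ + 1),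
          ((((Finset.univ.filter (fun i : Fin l => lam i j = true)).card : ℤ)) ^ 2
            - (((Finset.univ.filter (fun i : Fin l => c i = true)).card : ℤ)) ^ 2)) := by
    rw [← Finset.sum_sub_distrib]
    apply Finset.sum_congr rfl
    intro j _
    ring
  have hR : ∑ j ∈ Finset.Icc aK (bK + 1),
        ((((Finset.univ.filter (fun i : Fin l => κK i j = true)).card : ℤ) ^ 2)
          - (((Finset.univ.filter (fun i : Fin l => lam i j = true)).card : ℤ) ^ 2))
      = (∑ j ∈ Finset.Icc aK (bK + 1),
          ((((Finset.univ.filter (fun i : Fin l => κK i j = true)).card : ℤ)) ^ 2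
            - (((Finset.univ.filter (fun i : Fin l => c i = true)).card : ℤ)) ^ 2))
        - (∑ j ∈ Finset.Icc aK (bK + 1),
          ((((Finset.univ.filter (fun i : Fin l => lam i j = true)).card : ℤ)) ^ 2
            - (((Finset.univ.filter (fun i : Fin l => c i = true)).card : ℤ)) ^ 2)) := by
    rw [← Finset.sum_sub_distrib]
    apply Finset.sum_congr rfl
    intro j _
    ring
  rw [hL, hR, hJext, hKext,
    kappa_sum l n c aJ bJ hJle hJbig κJ hκJmem hκJdec,
    kappa_sum l n c aK bK hKle hKbig κK hκKmem hκKdec]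
end

section
/- Let I be a finite interval with n_i ≤ |I_+| for all i, let λ ∈ Λ_{I;n,c}, and set κ := κ_{I;n,c}. Then the integer Σ_{j∈I_+} (k_j² − l_j²) is even and nonnegative, where k_j := #{i : κ_{ij} = 1} and l_j := #{i : λ_{ij} = 1}. (Hence the defect def(λ) := (1/2)·Σ_{j∈I_+}(k_j² − l_j²) is a natural number.) -/
/-!
Write `Aᵢ` and `Bᵢ` for the sets of columns in which row `i` of `κ` resp. `λ` has entry `1`.
Then `∑ⱼ kⱼ² = ∑_{i,i'} #(Aᵢ ∩ Aᵢ')` and likewise for `λ`. Each row of a matrix in `Λ_{I;n,c}`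
has as many `1`s as the corresponding row of `κ`, and the rows of `κ` are initial segments, so
the `Aᵢ` form a chain and `#(Bᵢ ∩ Bᵢ') ≤ min (#Bᵢ) (#Bᵢ') = #(Aᵢ ∩ Aᵢ')`: this gives
nonnegativity. Evenness holds because `x² ≡ x (mod 2)` and `∑ⱼ kⱼ = ∑ᵢ #Aᵢ = ∑ᵢ #Bᵢ = ∑ⱼ lⱼ`.
-/

open Finset

namespace Finset

variable {ι α : Type*}

theorem sum_sq_card_filter (T : Finset ι) (S : Finset α) (p : ι → α → Prop)
    [∀ i j, Decidable (p i j)] :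
    ∑ j ∈ S, #{i ∈ T | p i j} ^ 2 = ∑ x ∈ T ×ˢ T, #{j ∈ S | p x.1 j ∧ p x.2 j} := by
  simp_rw [sq, ← card_product, ← filter_product]
  exact (sum_card_bipartiteAbove_eq_sum_card_bipartiteBelow
    (fun (x : ι × ι) j => p x.1 j ∧ p x.2 j)).symm

theorem card_inter_le_card_inter_of_subset_or_subset [DecidableEq α] {A A' B B' : Finset α}
    (hA : A ⊆ A' ∨ A' ⊆ A) (hB : #B = #A) (hB' : #B' = #A') : #(B ∩ B') ≤ #(A ∩ A') := by
  rcases hA with h | h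
  · rw [inter_eq_left.mpr h, ← hB]
    exact card_le_card inter_subset_left
  · rw [inter_eq_right.mpr h, ← hB']
    exact card_le_card inter_subset_right

theorem sum_sq_card_filter_le [DecidableEq α] (T : Finset ι) (S : Finset α)
    (p q : ι → α → Prop) [∀ i j, Decidable (p i j)] [∀ i j, Decidable (q i j)]
    (hchain : ∀ i i', {j ∈ S | p i j} ⊆ {j ∈ S | p i' j} ∨ {j ∈ S | p i' j} ⊆ {j ∈ S | p i j})
    (hrow : ∀ i, #{j ∈ S | q i j} = #{j ∈ S | p i j}) :
    ∑ j ∈ S, #{i ∈ T | q i j} ^ 2 ≤ ∑ j ∈ S, #{i ∈ T | p i j} ^ 2 := by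
  rw [sum_sq_card_filter, sum_sq_card_filter]
  refine sum_le_sum fun x _ => ?_
  simp only [filter_and]
  exact card_inter_le_card_inter_of_subset_or_subset (hchain x.1 x.2) (hrow x.1) (hrow x.2)

theorem filter_subset_or_filter_subset_of_antitoneOn [LinearOrder α] {S : Finset α}
    {f g : α → Bool} (hf : AntitoneOn f S) (hg : AntitoneOn g S) :
    {j ∈ S | f j} ⊆ {j ∈ S | g j} ∨ {j ∈ S | g j} ⊆ {j ∈ S | f j} := by
  by_contra! h
  obtain ⟨⟨j, hjf, hjg⟩, ⟨j', hj'g, hj'f⟩⟩ := And.imp not_subset.mp not_subset.mp h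
  simp only [mem_filter] at hjf hjg hj'g hj'f
  rcases le_total j j' with hle | hle
  · exact hjg ⟨hjf.1, Bool.le_iff_imp.mp (hg hjf.1 hj'g.1 hle) hj'g.2⟩
  · exact hj'f ⟨hj'g.1, Bool.le_iff_imp.mp (hf hj'g.1 hjf.1 hle) hjf.2⟩

theorem card_filter_eq_true_congr (S : Finset α) {f g : α → Bool} (d : Bool)
    (h : #{j ∈ S | f j ≠ d} = #{j ∈ S | g j ≠ d}) :
    #{j ∈ S | f j = true} = #{j ∈ S | g j = true} := by
  cases d
  · simpa only [ne_eq, Bool.not_eq_false] using h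
  · have hf := card_filter_add_card_filter_not (s := S) (fun j => f j = true)
    have hg := card_filter_add_card_filter_not (s := S) (fun j => g j = true)
    simp only [ne_eq] at h
    omega

end Finset

theorem Int.even_sum_sq_sub_sq_of_sum_eq {α : Type*} (S : Finset α) {u v : α → ℤ}
    (h : ∑ j ∈ S, u j = ∑ j ∈ S, v j) : Even (∑ j ∈ S, (u j ^ 2 - v j ^ 2)) := by
  have hsplit : ∑ j ∈ S, (u j ^ 2 - v j ^ 2)
      = ∑ j ∈ S, (u j * (u j - 1) - v j * (v j - 1)) + (∑ j ∈ S, u j - ∑ j ∈ S, v j) := by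
    rw [← sum_sub_distrib, ← sum_add_distrib]
    exact sum_congr rfl fun j _ => by ring
  rw [hsplit, h, sub_self, add_zero]
  exact even_sum _ fun j _ => (Int.even_mul_pred_self _).sub (Int.even_mul_pred_self _)

theorem stmt_2_general
    (l : ℕ) (n : Fin l → ℕ) (c : Fin l → Bool)
    (a b : ℤ)
    (lam : Fin l → ℤ → Bool)
    (hlam : ∀ i, ((Finset.Icc a (b + 1)).filter (fun j => lam i j ≠ c i)).card = n i)
    (κ : Fin l → ℤ → Bool)
    (hκmem : ∀ i, ((Finset.Icc a (b + 1)).filter (fun j => κ i j ≠ c i)).card = n i)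
    (hκdec : ∀ i, ∀ j ∈ Finset.Icc a (b + 1), ∀ j' ∈ Finset.Icc a (b + 1),
      j ≤ j' → κ i j' = true → κ i j = true) :
    0 ≤ (∑ j ∈ Finset.Icc a (b + 1),
        ((((Finset.univ.filter (fun i : Fin l => κ i j = true)).card : ℤ) ^ 2)
          - (((Finset.univ.filter (fun i : Fin l => lam i j = true)).card : ℤ) ^ 2)))
    ∧ Even (∑ j ∈ Finset.Icc a (b + 1),
        ((((Finset.univ.filter (fun i : Fin l => κ i j = true)).card : ℤ) ^ 2)
          - (((Finset.univ.filter (fun i : Fin l => lam i j = true)).card : ℤ) ^ 2))) := by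
  set S := Icc a (b + 1)
  have hrow : ∀ i, #{j ∈ S | lam i j = true} = #{j ∈ S | κ i j = true} := fun i =>
    card_filter_eq_true_congr S (c i) ((hlam i).trans (hκmem i).symm)
  have hanti : ∀ i, AntitoneOn (κ i) S := fun i _ hj _ hj' hle =>
    Bool.le_iff_imp.mpr (hκdec i _ hj _ hj' hle)
  refine ⟨?_, Int.even_sum_sq_sub_sq_of_sum_eq S ?_⟩
  · rw [sum_sub_distrib, sub_nonneg]
    exact_mod_cast sum_sq_card_filter_le univ S
      (fun i j => κ i j = true) (fun i j => lam i j = true)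
      (fun i i' => filter_subset_or_filter_subset_of_antitoneOn (hanti i) (hanti i')) hrow
  · have hcols (f : Fin l → ℤ → Bool) :
        ∑ j ∈ S, #{i | f i j = true} = ∑ i, #{j ∈ S | f i j = true} :=
      (sum_card_bipartiteAbove_eq_sum_card_bipartiteBelow (fun i j => f i j = true)).symm
    have hsum : ∑ j ∈ S, #{i | κ i j = true} = ∑ j ∈ S, #{i | lam i j = true} := by
      rw [hcols, hcols]
      exact sum_congr rfl fun i _ => (hrow i).symm
    exact_mod_cast hsum

/-- For a finite interval `I` with `n_i ≤ |I₊|` and `λ ∈ Λ_{I;n,c}`,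
the integer `Σ_{j∈I₊} (k_j² − l_j²)` is nonnegative and even (so the defect is a
natural number).  Here `I = [a,b]`, `I₊ = [a, b+1]`, `κ = κ_{I;n,c}`. -/
theorem stmt_2
    (l : ℕ) (hl : 1 ≤ l) (n : Fin l → ℕ) (c : Fin l → Bool)
    (a b : ℤ) (hab : a ≤ b)
    (hn : ∀ i, (n i : ℤ) ≤ b - a + 2)
    (lam : Fin l → ℤ → Bool)
    (hlam : ∀ i, ((Finset.Icc a (b + 1)).filter (fun j => lam i j ≠ c i)).card = n i)
    (κ : Fin l → ℤ → Bool)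
    (hκmem : ∀ i, ((Finset.Icc a (b + 1)).filter (fun j => κ i j ≠ c i)).card = n i)
    (hκdec : ∀ i, ∀ j ∈ Finset.Icc a (b + 1), ∀ j' ∈ Finset.Icc a (b + 1),
      j ≤ j' → κ i j' = true → κ i j = true) :
    0 ≤ (∑ j ∈ Finset.Icc a (b + 1),
        ((((Finset.univ.filter (fun i : Fin l => κ i j = true)).card : ℤ) ^ 2)
          - (((Finset.univ.filter (fun i : Fin l => lam i j = true)).card : ℤ) ^ 2)))
    ∧ Even (∑ j ∈ Finset.Icc a (b + 1),
        ((((Finset.univ.filter (fun i : Fin l => κ i j = true)).card : ℤ) ^ 2)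
          - (((Finset.univ.filter (fun i : Fin l => lam i j = true)).card : ℤ) ^ 2))) :=
  stmt_2_general l n c a b lam hlam κ hκmem hκdec
end

section
/- Let I be a nonempty interval and λ, μ ∈ Λ_{I;n,c}. For 1 ≤ k ≤ l define wt_k(λ) ∈ P_I (the finitely supported function I → ℤ) by wt_k(λ)(h) := Σ_{i=1}^k (λ_{ih} − λ_{i,h+1}) for h ∈ I; in the paper's notation wt_k(λ) = |λ_1| + ⋯ + |λ_k|, with the conventions for infinite intervals built in. Then the following are equivalent: (i) wt_l(λ) = wt_l(μ), and for every 1 ≤ k ≤ l there is a finitely supported m : I → ℕ with wt_k(λ) − wt_k(μ) = Σ_{g∈I} m_g α_g; (ii) for every h ∈ I and every 1 ≤ k ≤ l one has S_{k,h}(λ) ≥ S_{k,h}(μ), with equality whenever k = l. -/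
/-- Discrete maximum principle: a finitely supported function on ℤ, vanishing off `I`,
satisfying `2 e h = e (h-1) + e (h+1)` on `I`, is nonpositive. -/
lemma pset_le_zero (I : Set ℤ) (e : ℤ → ℤ) (hfin : {h : ℤ | e h ≠ 0}.Finite)
    (hout : ∀ h, h ∉ I → e h = 0)
    (hharm : ∀ h ∈ I, 2 * e h = e (h - 1) + e (h + 1)) :
    ∀ h, e h ≤ 0 := by
  by_contra hc
  push_neg at hc
  obtain ⟨h1, hh1⟩ := hc
  set T := hfin.toFinset with hT
  have h1T : h1 ∈ T := by simp [hT]; omega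
  have hne : (T.image e).Nonempty := ⟨e h1, Finset.mem_image_of_mem e h1T⟩
  set M := (T.image e).max' hne with hM
  have hMpos : 0 < M := lt_of_lt_of_le hh1 (Finset.le_max' _ _ (Finset.mem_image_of_mem e h1T))
  have hub : ∀ h, e h ≤ M := by
    intro h
    by_cases hh : h ∈ T
    · exact Finset.le_max' _ _ (Finset.mem_image_of_mem e hh)
    · have : e h = 0 := by simpa [hT] using hh
      omega
  obtain ⟨h0, h0T, hh0⟩ := Finset.mem_image.mp ((T.image e).max'_mem hne)
  have step : ∀ t : ℕ, e (h0 + t) = M ∧ (h0 + (t : ℤ)) ∈ I := by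
    intro t
    induction t with
    | zero =>
      refine ⟨by simpa using hh0, ?_⟩
      by_contra hI
      have := hout h0 (by simpa using hI)
      omega
    | succ t ih =>
      have hh := hharm (h0 + t) ih.2
      have hu1 := hub (h0 + (t : ℤ) - 1)
      have hu2 := hub (h0 + (t : ℤ) + 1)
      have heq : e (h0 + (t : ℤ) + 1) = M := by omega
      have hcast : h0 + ((t : ℕ) + 1 : ℕ) = h0 + (t : ℤ) + 1 := by push_cast; ring
      refine ⟨by rw [hcast]; exact heq, ?_⟩
      rw [hcast] at *
      by_contra hI
      have := hout _ hI
      omega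
  have hinf : {h : ℤ | e h ≠ 0}.Infinite := by
    refine Set.infinite_of_injective_forall_mem (f := fun t : ℕ => h0 + (t : ℤ)) ?_ ?_
    · intro a b hab
      simpa using hab
    · intro t
      have := (step t).1
      simp only [Set.mem_setOf_eq]
      omega
  exact hinf hfin

lemma pset_eq_zero (I : Set ℤ) (e : ℤ → ℤ) (hfin : {h : ℤ | e h ≠ 0}.Finite)
    (hout : ∀ h, h ∉ I → e h = 0)
    (hharm : ∀ h ∈ I, 2 * e h = e (h - 1) + e (h + 1)) :
    ∀ h, e h = 0 := by
  have h1 := pset_le_zero I e hfin hout hharm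
  have h2 := pset_le_zero I (fun h => -e h) (by simpa using hfin)
    (fun h hh => by simp [hout h hh]) (fun h hh => by have := hharm h hh; simp; omega)
  intro h
  have := h1 h; have := h2 h; simp at *; omega

lemma pset_finsum (I : Set ℤ) (α : ℤ → ℤ → ℤ)
    (hα : ∀ g h, α g h =
      2 * (if h = g then 1 else 0) - (if h = g - 1 then 1 else 0) - (if h = g + 1 then 1 else 0))
    (m : ℤ → ℕ) (hm : ∀ g, g ∉ I → m g = 0) (h : ℤ) :
    ∑ᶠ g ∈ I, (m g : ℤ) * α g h = 2 * (m h : ℤ) - (m (h - 1) : ℤ) - (m (h + 1) : ℤ) := by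
  have hsupp : Function.support (fun g => (m g : ℤ) * α g h) ⊆ ↑({h - 1, h, h + 1} : Finset ℤ) := by
    intro g hg
    simp only [Function.mem_support] at hg
    by_contra hgm
    simp only [Finset.coe_insert, Set.mem_insert_iff, Finset.coe_singleton,
      Set.mem_singleton_iff] at hgm
    push_neg at hgm
    have : α g h = 0 := by rw [hα]; split_ifs <;> omega
    simp [this] at hg
  have h1 : ∑ᶠ g ∈ I, (m g : ℤ) * α g h = ∑ᶠ g, (m g : ℤ) * α g h := by
    rw [finsum_mem_def]
    congr 1
    ext g
    by_cases hg : g ∈ I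
    · simp [Set.indicator_of_mem hg]
    · simp [Set.indicator_of_notMem hg, hm g hg]
  rw [h1, finsum_eq_sum_of_support_subset _ hsupp]
  have e1 : (h : ℤ) - 1 ≠ h := by omega
  have e2 : (h : ℤ) - 1 ≠ h + 1 := by omega
  have e3 : (h : ℤ) ≠ h + 1 := by omega
  rw [Finset.sum_insert (by simp [e1, e2]), Finset.sum_insert (by simp [e3]),
    Finset.sum_singleton]
  rw [hα, hα, hα]
  have c1 : ¬ (h = h - 1) := by omega
  have c2 : ¬ (h = h - 1 - 1) := by omega
  have c3 : h = h - 1 + 1 := by omega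
  have c4 : ¬ (h = h + 1) := by omega
  have c5 : h = h + 1 - 1 := by omega
  have c6 : ¬ (h = h + 1 + 1) := by omega
  split_ifs <;> omega

/-- Lemma `pset`: for `λ, μ ∈ Λ_{I;n,c}`, the dominance-order condition
`wt_l(λ) = wt_l(μ)` and `wt_k(λ) − wt_k(μ) ∈ Q_I⁺` for all `k` is equivalent to the
partial-sum condition `S_{k,h}(λ) ≥ S_{k,h}(μ)` for all `h ∈ I`, `1 ≤ k ≤ l`, with
equality when `k = l`. -/
theorem stmt_3
    (l : ℕ) (hl : 1 ≤ l) (n : Fin l → ℕ) (c : Fin l → Bool)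
    (I : Set ℤ) (hIconn : I.OrdConnected) (hIne : I.Nonempty)
    (Iplus : Set ℤ) (hIplus : Iplus = I ∪ (fun x => x + 1) '' I)
    (lam mu : Fin l → ℤ → Bool)
    (hlam : ∀ i, {j : ℤ | j ∈ Iplus ∧ lam i j ≠ c i}.Finite ∧
      {j : ℤ | j ∈ Iplus ∧ lam i j ≠ c i}.ncard = n i)
    (hmu : ∀ i, {j : ℤ | j ∈ Iplus ∧ mu i j ≠ c i}.Finite ∧
      {j : ℤ | j ∈ Iplus ∧ mu i j ≠ c i}.ncard = n i)
    (α : ℤ → ℤ → ℤ)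
    (hα : ∀ g h, α g h =
      2 * (if h = g then 1 else 0) - (if h = g - 1 then 1 else 0) - (if h = g + 1 then 1 else 0))
    (wt : (Fin l → ℤ → Bool) → ℕ → ℤ → ℤ)
    (hwt : ∀ ν k h, wt ν k h = ∑ i ∈ Finset.univ.filter (fun i : Fin l => (i : ℕ) < k),
      ((if ν i h then (1 : ℤ) else 0) - (if ν i (h + 1) then (1 : ℤ) else 0)))
    (S : (Fin l → ℤ → Bool) → ℕ → ℤ → ℤ)
    (hS : ∀ ν k h, S ν k h = ∑ i ∈ Finset.univ.filter (fun i : Fin l => (i : ℕ) < k),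
      (if c i then (-1 : ℤ) else 1) * ({j : ℤ | j ∈ Iplus ∧ j ≤ h ∧ ν i j ≠ c i}.ncard : ℤ)) :
    ((∀ h ∈ I, wt lam l h = wt mu l h) ∧
      (∀ k : ℕ, 1 ≤ k → k ≤ l → ∃ m : ℤ → ℕ, {g : ℤ | m g ≠ 0}.Finite ∧
        (∀ g, g ∉ I → m g = 0) ∧
        ∀ h ∈ I, wt lam k h - wt mu k h = ∑ᶠ g ∈ I, (m g : ℤ) * α g h)) ↔
    (∀ h ∈ I, ∀ k : ℕ, 1 ≤ k → k ≤ l →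
      S mu k h ≤ S lam k h ∧ (k = l → S lam k h = S mu k h)) := by
  classical
  set A : Fin l → Finset ℤ := fun i => (hlam i).1.toFinset with hA
  set B : Fin l → Finset ℤ := fun i => (hmu i).1.toFinset with hB
  have hAmem : ∀ i j, j ∈ A i ↔ j ∈ Iplus ∧ lam i j ≠ c i := by
    intro i j; simp [hA, Set.Finite.mem_toFinset]
  have hBmem : ∀ i j, j ∈ B i ↔ j ∈ Iplus ∧ mu i j ≠ c i := by
    intro i j; simp [hB, Set.Finite.mem_toFinset]
  have hAcard : ∀ i, (A i).card = n i := by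
    intro i
    show ((hlam i).1.toFinset).card = n i
    rw [← Set.ncard_eq_toFinset_card _ (hlam i).1]
    exact (hlam i).2
  have hBcard : ∀ i, (B i).card = n i := by
    intro i
    show ((hmu i).1.toFinset).card = n i
    rw [← Set.ncard_eq_toFinset_card _ (hmu i).1]
    exact (hmu i).2
  set D : ℕ → ℤ → ℤ := fun k h => ∑ i ∈ Finset.univ.filter (fun i : Fin l => (i : ℕ) < k),
    (if c i then (-1 : ℤ) else 1) *
      ((((A i).filter (fun j => j ≤ h)).card : ℤ) - (((B i).filter (fun j => j ≤ h)).card : ℤ))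
    with hD
  -- S difference equals D
  have hSD : ∀ k h, S lam k h - S mu k h = D k h := by
    intro k h
    rw [hS, hS, hD, ← Finset.sum_sub_distrib]
    apply Finset.sum_congr rfl
    intro i _
    have e1 : {j : ℤ | j ∈ Iplus ∧ j ≤ h ∧ lam i j ≠ c i} = ↑((A i).filter (fun j => j ≤ h)) := by
      ext j; simp [hAmem]; tauto
    have e2 : {j : ℤ | j ∈ Iplus ∧ j ≤ h ∧ mu i j ≠ c i} = ↑((B i).filter (fun j => j ≤ h)) := by
      ext j; simp [hBmem]; tauto
    rw [e1, e2, Set.ncard_coe_finset, Set.ncard_coe_finset]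
    ring
  -- D vanishes when h is below / above everything
  have hDempty : ∀ k h, (∀ i : Fin l, ∀ j, j ∈ A i ∪ B i → h < j) → D k h = 0 := by
    intro k h hh
    rw [hD]
    apply Finset.sum_eq_zero
    intro i _
    have ea : (A i).filter (fun j => j ≤ h) = ∅ := by
      apply Finset.filter_false_of_mem
      intro j hj
      have := hh i j (Finset.mem_union_left _ hj); omega
    have eb : (B i).filter (fun j => j ≤ h) = ∅ := by
      apply Finset.filter_false_of_mem
      intro j hj
      have := hh i j (Finset.mem_union_right _ hj); omega
    simp [ea, eb]
  have hDfull : ∀ k h, (∀ i : Fin l, ∀ j, j ∈ A i ∪ B i → j ≤ h) → D k h = 0 := by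
    intro k h hh
    rw [hD]
    apply Finset.sum_eq_zero
    intro i _
    have ea : (A i).filter (fun j => j ≤ h) = A i :=
      Finset.filter_true_of_mem (fun j hj => hh i j (Finset.mem_union_left _ hj))
    have eb : (B i).filter (fun j => j ≤ h) = B i :=
      Finset.filter_true_of_mem (fun j hj => hh i j (Finset.mem_union_right _ hj))
    rw [ea, eb, hAcard, hBcard]
    ring
  -- D vanishes outside I
  have houtD : ∀ k h, h ∉ I → D k h = 0 := by
    intro k h hh
    by_cases hlo : ∀ x ∈ I, h < x
    · apply hDempty
      intro i j hj
      have hjp : j ∈ Iplus := by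
        rcases Finset.mem_union.mp hj with hj' | hj'
        · exact ((hAmem i j).mp hj').1
        · exact ((hBmem i j).mp hj').1
      rw [hIplus] at hjp
      rcases hjp with hj' | ⟨x, hx, hxe⟩
      · exact hlo j hj'
      · simp only at hxe
        have := hlo x hx; omega
    · push_neg at hlo
      obtain ⟨x, hx, hxh⟩ := hlo
      have hhi : ∀ y ∈ I, y < h := by
        intro y hy
        by_contra hyh
        push_neg at hyh
        exact hh (hIconn.out hx hy ⟨hxh, hyh⟩)
      apply hDfull
      intro i j hj
      have hjp : j ∈ Iplus := by
        rcases Finset.mem_union.mp hj with hj' | hj'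
        · exact ((hAmem i j).mp hj').1
        · exact ((hBmem i j).mp hj').1
      rw [hIplus] at hjp
      rcases hjp with hj' | ⟨y, hy, hye⟩
      · exact le_of_lt (hhi j hj')
      · simp only at hye
        have := hhi y hy; omega
  -- D has finite support
  have hfinD : ∀ k, {h : ℤ | D k h ≠ 0}.Finite := by
    intro k
    set U : Finset ℤ := Finset.univ.biUnion (fun i : Fin l => A i ∪ B i) with hU
    by_cases hUne : U.Nonempty
    · apply Set.Finite.subset (Set.finite_Icc (U.min' hUne) (U.max' hUne))
      intro h hh
      simp only [Set.mem_setOf_eq] at hh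
      by_contra hmem
      simp only [Set.mem_Icc] at hmem
      push_neg at hmem
      by_cases h1 : h < U.min' hUne
      · exact hh (hDempty k h (fun i j hj => lt_of_lt_of_le h1
          (Finset.min'_le U j (Finset.mem_biUnion.mpr ⟨i, Finset.mem_univ i, hj⟩))))
      · push_neg at h1
        have h2 := hmem h1
        exact hh (hDfull k h (fun i j hj => le_of_lt (lt_of_le_of_lt
          (Finset.le_max' U j (Finset.mem_biUnion.mpr ⟨i, Finset.mem_univ i, hj⟩)) h2)))
    · have : ∀ h, D k h = 0 := by
        intro h
        apply hDempty
        intro i j hj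
        exact absurd ⟨j, Finset.mem_biUnion.mpr ⟨i, Finset.mem_univ i, hj⟩⟩ hUne
      simp [this]
  -- the step relation
  have hsplit : ∀ (s : Finset ℤ) (h : ℤ), (s.filter (fun j => j ≤ h)).card
      = (s.filter (fun j => j ≤ h - 1)).card + (if h ∈ s then 1 else 0) := by
    intro s h
    have hdis : Disjoint (s.filter (fun j => j ≤ h - 1)) (s.filter (fun j => j = h)) := by
      rw [Finset.disjoint_left]
      intro a ha hb
      simp only [Finset.mem_filter] at ha hb
      omega
    have hun : s.filter (fun j => j ≤ h)
        = s.filter (fun j => j ≤ h - 1) ∪ s.filter (fun j => j = h) := by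
      rw [← Finset.filter_or]
      apply Finset.filter_congr
      intro j _
      omega
    rw [hun, Finset.card_union_of_disjoint hdis, Finset.filter_eq']
    by_cases hh : h ∈ s <;> simp [hh]
  have hstep : ∀ k h, h ∈ Iplus → D k h - D k (h - 1)
      = ∑ i ∈ Finset.univ.filter (fun i : Fin l => (i : ℕ) < k),
        ((if lam i h then (1 : ℤ) else 0) - (if mu i h then (1 : ℤ) else 0)) := by
    intro k h hp
    rw [hD, ← Finset.sum_sub_distrib]
    apply Finset.sum_congr rfl
    intro i _
    have ha := hsplit (A i) h
    have hb := hsplit (B i) h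
    have hA' : h ∈ A i ↔ lam i h ≠ c i := by simp [hAmem, hp]
    have hB' : h ∈ B i ↔ mu i h ≠ c i := by simp [hBmem, hp]
    by_cases hc : c i <;> by_cases h1 : lam i h <;> by_cases h2 : mu i h <;>
      simp only [hc, h1, h2, ne_eq, not_true_eq_false, not_false_eq_true, iff_true, iff_false,
        Bool.true_eq_false, Bool.false_eq_true] at hA' hB' <;>
      simp only [hA', hB', hc, h1, h2, if_true, if_false, not_true_eq_false, if_neg,
        Bool.true_eq_false, Bool.false_eq_true] at ha hb ⊢ <;>
      push_cast [ha, hb] <;> ring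
  -- the second-difference relation, for h ∈ I
  have hF4 : ∀ k h, h ∈ I → wt lam k h - wt mu k h = 2 * D k h - D k (h - 1) - D k (h + 1) := by
    intro k h hh
    have hp1 : h ∈ Iplus := by rw [hIplus]; exact Or.inl hh
    have hp2 : h + 1 ∈ Iplus := by rw [hIplus]; exact Or.inr ⟨h, hh, rfl⟩
    have hs1 := hstep k h hp1
    have hs2 := hstep k (h + 1) hp2
    rw [show h + 1 - 1 = h by ring] at hs2
    have hwtd : wt lam k h - wt mu k h =
        (∑ i ∈ Finset.univ.filter (fun i : Fin l => (i : ℕ) < k),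
          ((if lam i h then (1 : ℤ) else 0) - (if mu i h then (1 : ℤ) else 0)))
        - (∑ i ∈ Finset.univ.filter (fun i : Fin l => (i : ℕ) < k),
          ((if lam i (h + 1) then (1 : ℤ) else 0) - (if mu i (h + 1) then (1 : ℤ) else 0))) := by
      rw [hwt, hwt, ← Finset.sum_sub_distrib, ← Finset.sum_sub_distrib]
      apply Finset.sum_congr rfl
      intro i _
      ring
    rw [hwtd, ← hs1, ← hs2]
    ring
  constructor
  · rintro ⟨hwtl, hdom⟩ h hh k hk1 hkl
    obtain ⟨m, hmfin, hmout, hmeq⟩ := hdom k hk1 hkl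
    have hDm : ∀ g, D k g = (m g : ℤ) := by
      have hz := pset_eq_zero I (fun g => D k g - (m g : ℤ))
        (Set.Finite.subset ((hfinD k).union hmfin) (by
          intro g hg
          simp only [Set.mem_setOf_eq, Set.mem_union] at hg ⊢
          by_contra hcon
          push_neg at hcon
          obtain ⟨h1, h2⟩ := hcon
          omega))
        (by
          intro g hg
          simp [houtD k g hg, hmout g hg])
        (by
          intro g hg
          have h4 := hF4 k g hg
          have h5 := hmeq g hg
          rw [pset_finsum I α hα m hmout g] at h5
          omega)
      intro g
      have := hz g
      omega
    refine ⟨?_, ?_⟩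
    · have h1 := hSD k h
      have h2 := hDm h
      have h3 : (0:ℤ) ≤ (m h : ℤ) := Int.natCast_nonneg _
      omega
    · intro hkeq
      subst hkeq
      have hD0 : ∀ g, D k g = 0 := by
        apply pset_eq_zero I (D k) (hfinD k) (houtD k)
        intro g hg
        have h4 := hF4 k g hg
        have h5 := hwtl g hg
        omega
      have h6 := hSD k h
      have h7 := hD0 h
      omega
  · intro hpos
    have hDl0 : ∀ g, D l g = 0 := by
      intro g
      by_cases hg : g ∈ I
      · have h1 := (hpos g hg l hl le_rfl).2 rfl
        have h2 := hSD l g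
        omega
      · exact houtD l g hg
    refine ⟨?_, ?_⟩
    · intro h hh
      have h4 := hF4 l h hh
      rw [hDl0, hDl0, hDl0] at h4
      omega
    · intro k hk1 hkl
      have hDnn : ∀ g, 0 ≤ D k g := by
        intro g
        by_cases hg : g ∈ I
        · have h1 := (hpos g hg k hk1 hkl).1
          have h2 := hSD k g
          omega
        · rw [houtD k g hg]
      refine ⟨fun g => (D k g).toNat, ?_, ?_, ?_⟩
      · apply (hfinD k).subset
        intro g hg
        simp only [Set.mem_setOf_eq] at hg ⊢
        omega
      · intro g hg
        simp [houtD k g hg]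
      · intro h hh
        rw [pset_finsum I α hα _ (fun g hg => by simp [houtD k g hg]) h]
        have h4 := hF4 k h hh
        rw [Int.toNat_of_nonneg (hDnn h), Int.toNat_of_nonneg (hDnn (h-1)),
          Int.toNat_of_nonneg (hDnn (h+1))]
        omega
end

section
/- Let I be a nonempty interval and J ⊆ I a subinterval. Let Λ_{≤J} be the set of λ ∈ Λ_{I;n,c} such that S_{k,h}(λ) ≥ 0 for all 1 ≤ k ≤ l and all integers h < min(J) (no condition if J has no minimum), and Σ_{i=1}^k Σ_{j∈I_+, j>h, λ_{ij}≠c_i} (−1)^{c_i} ≤ 0 for all 1 ≤ k ≤ l and all integers h > max(J) (no condition if J has no maximum); let Λ_{<J} be the set of λ ∈ Λ_{≤J} for which at least one of these inequalities is strict; and let Λ_J := {λ ∈ Λ_{I;n,c} : λ_{ij} = c_i for all i and all j ∈ I_+ ∖ J_+}. Then: (a) Λ_{≤J} and Λ_{<J} are lower sets for the order ⪯ (i.e. if μ ⪯ λ and λ belongs to the set, then so does μ); and (b) Λ_J = Λ_{≤J} ∖ Λ_{<J}. -/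
/-- `Λ_{≤J}` and `Λ_{<J}` are lower sets (ideals) for the order `⪯` on
`Λ_{I;n,c}`, and `Λ_J = Λ_{≤J} ∖ Λ_{<J}`. -/
theorem stmt_4
    (l : ℕ) (hl : 1 ≤ l) (n : Fin l → ℕ) (c : Fin l → Bool)
    (I : Set ℤ) (hIconn : I.OrdConnected) (hIne : I.Nonempty)
    (J : Set ℤ) (hJconn : J.OrdConnected) (hJne : J.Nonempty) (hJI : J ⊆ I)
    (Iplus Jplus : Set ℤ)
    (hIplus : Iplus = I ∪ (fun x => x + 1) '' I)
    (hJplus : Jplus = J ∪ (fun x => x + 1) '' J)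
    (Lam : Set (Fin l → ℤ → Bool))
    (hLam : Lam = {ν | ∀ i, {j : ℤ | j ∈ Iplus ∧ ν i j ≠ c i}.Finite ∧
      {j : ℤ | j ∈ Iplus ∧ ν i j ≠ c i}.ncard = n i})
    (S T : (Fin l → ℤ → Bool) → ℕ → ℤ → ℤ)
    (hS : ∀ ν k h, S ν k h = ∑ i ∈ Finset.univ.filter (fun i : Fin l => (i : ℕ) < k),
      (if c i then (-1 : ℤ) else 1) * ({j : ℤ | j ∈ Iplus ∧ j ≤ h ∧ ν i j ≠ c i}.ncard : ℤ))
    (hT : ∀ ν k h, T ν k h = ∑ i ∈ Finset.univ.filter (fun i : Fin l => (i : ℕ) < k),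
      (if c i then (-1 : ℤ) else 1) * ({j : ℤ | j ∈ Iplus ∧ h < j ∧ ν i j ≠ c i}.ncard : ℤ))
    (prec : (Fin l → ℤ → Bool) → (Fin l → ℤ → Bool) → Prop)
    (hprec : ∀ ν₁ ν₂, prec ν₁ ν₂ ↔ ∀ h ∈ I, ∀ k : ℕ, 1 ≤ k → k ≤ l →
      S ν₂ k h ≤ S ν₁ k h ∧ (k = l → S ν₁ k h = S ν₂ k h))
    (LamLeJ LamLtJ LamJ : Set (Fin l → ℤ → Bool))
    (hLeJ : LamLeJ = {ν ∈ Lam |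
      (∀ k : ℕ, 1 ≤ k → k ≤ l → ∀ h : ℤ, (∀ j ∈ J, h < j) → 0 ≤ S ν k h) ∧
      (∀ k : ℕ, 1 ≤ k → k ≤ l → ∀ h : ℤ, (∀ j ∈ J, j < h) → T ν k h ≤ 0)})
    (hLtJ : LamLtJ = {ν ∈ LamLeJ |
      (∃ k : ℕ, ∃ h : ℤ, 1 ≤ k ∧ k ≤ l ∧ (∀ j ∈ J, h < j) ∧ 0 < S ν k h) ∨
      (∃ k : ℕ, ∃ h : ℤ, 1 ≤ k ∧ k ≤ l ∧ (∀ j ∈ J, j < h) ∧ T ν k h < 0)})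
    (hJset : LamJ = {ν ∈ Lam | ∀ i, ∀ j ∈ Iplus, j ∉ Jplus → ν i j = c i}) :
    (∀ ν μ, ν ∈ Lam → μ ∈ Lam → prec μ ν →
      (ν ∈ LamLeJ → μ ∈ LamLeJ) ∧ (ν ∈ LamLtJ → μ ∈ LamLtJ))
    ∧ LamJ = LamLeJ \ LamLtJ := by
  -- trichotomy for ord-connected sets
  have tri : ∀ (A : Set ℤ), A.OrdConnected → ∀ h : ℤ, h ∉ A →
      (∀ a ∈ A, h < a) ∨ (∀ a ∈ A, a < h) := by
    intro A hA h hh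
    by_contra hcon
    push_neg at hcon
    obtain ⟨⟨a, ha, hah⟩, b, hb, hbh⟩ := hcon
    exact hh (hA.out ha hb ⟨hah, hbh⟩)
  have hmem : ∀ ν ∈ Lam, ∀ i : Fin l, {j : ℤ | j ∈ Iplus ∧ ν i j ≠ c i}.Finite ∧
      {j : ℤ | j ∈ Iplus ∧ ν i j ≠ c i}.ncard = n i := by
    intro ν hν
    rw [hLam] at hν
    exact hν
  -- S + T is constant on Lam
  have keyST : ∀ ν ∈ Lam, ∀ (k : ℕ) (h : ℤ), S ν k h + T ν k h =
      ∑ i ∈ Finset.univ.filter (fun i : Fin l => (i : ℕ) < k),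
        (if c i then (-1 : ℤ) else 1) * (n i : ℤ) := by
    intro ν hν k h
    rw [hS, hT, ← Finset.sum_add_distrib]
    refine Finset.sum_congr rfl fun i _ => ?_
    rw [← mul_add]
    congr 1
    obtain ⟨hf, hn⟩ := hmem ν hν i
    have hf1 : {j : ℤ | j ∈ Iplus ∧ j ≤ h ∧ ν i j ≠ c i}.Finite :=
      hf.subset (fun x hx => ⟨hx.1, hx.2.2⟩)
    have hf2 : {j : ℤ | j ∈ Iplus ∧ h < j ∧ ν i j ≠ c i}.Finite :=
      hf.subset (fun x hx => ⟨hx.1, hx.2.2⟩)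
    have hdisj : Disjoint {j : ℤ | j ∈ Iplus ∧ j ≤ h ∧ ν i j ≠ c i}
        {j : ℤ | j ∈ Iplus ∧ h < j ∧ ν i j ≠ c i} := by
      rw [Set.disjoint_left]
      rintro j ⟨_, h2, _⟩ ⟨_, h2', _⟩
      omega
    have h1 : {j : ℤ | j ∈ Iplus ∧ j ≤ h ∧ ν i j ≠ c i} ∪
        {j : ℤ | j ∈ Iplus ∧ h < j ∧ ν i j ≠ c i} = {j : ℤ | j ∈ Iplus ∧ ν i j ≠ c i} := by
      ext j
      simp only [Set.mem_union, Set.mem_setOf_eq]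
      constructor
      · rintro (⟨a1, a2, a3⟩ | ⟨a1, a2, a3⟩) <;> exact ⟨a1, a3⟩
      · rintro ⟨a1, a3⟩
        rcases le_or_gt j h with a2 | a2
        · exact Or.inl ⟨a1, a2, a3⟩
        · exact Or.inr ⟨a1, a2, a3⟩
    have hadd := Set.ncard_union_eq hdisj hf1 hf2
    rw [h1, hn] at hadd
    exact_mod_cast hadd.symm
  -- S vanishes below I, T vanishes above I
  have Szero : ∀ ν (k : ℕ) (h : ℤ), (∀ a ∈ I, h < a) → S ν k h = 0 := by
    intro ν k h hh
    rw [hS]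
    refine Finset.sum_eq_zero fun i _ => ?_
    have he : {j : ℤ | j ∈ Iplus ∧ j ≤ h ∧ ν i j ≠ c i} = ∅ := by
      ext j
      simp only [Set.mem_setOf_eq, Set.mem_empty_iff_false, iff_false]
      rintro ⟨hjI, hjh, _⟩
      rw [hIplus] at hjI
      rcases hjI with hj | ⟨x, hx, hxe⟩
      · have := hh j hj; omega
      · have hxe' : x + 1 = j := hxe
        have := hh x hx; omega
    rw [he]
    simp
  have Tzero : ∀ ν (k : ℕ) (h : ℤ), (∀ a ∈ I, a < h) → T ν k h = 0 := by
    intro ν k h hh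
    rw [hT]
    refine Finset.sum_eq_zero fun i _ => ?_
    have he : {j : ℤ | j ∈ Iplus ∧ h < j ∧ ν i j ≠ c i} = ∅ := by
      ext j
      simp only [Set.mem_setOf_eq, Set.mem_empty_iff_false, iff_false]
      rintro ⟨hjI, hjh, _⟩
      rw [hIplus] at hjI
      rcases hjI with hj | ⟨x, hx, hxe⟩
      · have := hh j hj; omega
      · have hxe' : x + 1 = j := hxe
        have := hh x hx; omega
    rw [he]
    simp
  -- step formulas
  have filterSucc : ∀ i : Fin l, Finset.univ.filter (fun i' : Fin l => (i' : ℕ) < (i : ℕ) + 1)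
      = insert i (Finset.univ.filter (fun i' : Fin l => (i' : ℕ) < (i : ℕ))) := by
    intro i
    ext i'
    simp only [Finset.mem_filter, Finset.mem_univ, true_and, Finset.mem_insert, Fin.ext_iff]
    omega
  have stepS : ∀ ν (h : ℤ) (i : Fin l), S ν ((i : ℕ) + 1) h = S ν (i : ℕ) h +
      (if c i then (-1 : ℤ) else 1) * ({j : ℤ | j ∈ Iplus ∧ j ≤ h ∧ ν i j ≠ c i}.ncard : ℤ) := by
    intro ν h i
    rw [hS, hS, filterSucc i, Finset.sum_insert (by simp)]
    ring
  have stepT : ∀ ν (h : ℤ) (i : Fin l), T ν ((i : ℕ) + 1) h = T ν (i : ℕ) h +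
      (if c i then (-1 : ℤ) else 1) * ({j : ℤ | j ∈ Iplus ∧ h < j ∧ ν i j ≠ c i}.ncard : ℤ) := by
    intro ν h i
    rw [hT, hT, filterSucc i, Finset.sum_insert (by simp)]
    ring
  -- Part (a)
  have partA : ∀ ν μ, ν ∈ Lam → μ ∈ Lam → prec μ ν →
      (ν ∈ LamLeJ → μ ∈ LamLeJ) ∧ (ν ∈ LamLtJ → μ ∈ LamLtJ) := by
    intro ν μ hν hμ hpm
    have hp := (hprec μ ν).mp hpm
    have hLe : ν ∈ LamLeJ → μ ∈ LamLeJ := by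
      intro hνLe
      rw [hLeJ] at hνLe ⊢
      obtain ⟨hνL, hc1, hc2⟩ := hνLe
      refine ⟨hμ, ?_, ?_⟩
      · intro k hk1 hk2 h hh
        by_cases hhI : h ∈ I
        · exact le_trans (hc1 k hk1 hk2 h hh) (hp h hhI k hk1 hk2).1
        · rcases tri I hIconn h hhI with hlo | hhi
          · rw [Szero μ k h hlo]
          · obtain ⟨j0, hj0⟩ := hJne
            have := hh j0 hj0
            have := hhi j0 (hJI hj0)
            omega
      · intro k hk1 hk2 h hh
        by_cases hhI : h ∈ I
        · have e1 := keyST ν hν k h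
          have e2 := keyST μ hμ k h
          have e3 := (hp h hhI k hk1 hk2).1
          have e4 := hc2 k hk1 hk2 h hh
          linarith
        · rcases tri I hIconn h hhI with hlo | hhi
          · obtain ⟨j0, hj0⟩ := hJne
            have := hh j0 hj0
            have := hlo j0 (hJI hj0)
            omega
          · rw [Tzero μ k h hhi]
    refine ⟨hLe, ?_⟩
    intro hνLt
    rw [hLtJ] at hνLt ⊢
    obtain ⟨hνLe, hstrict⟩ := hνLt
    refine ⟨hLe hνLe, ?_⟩
    rcases hstrict with ⟨k, h, hk1, hk2, hh, hpos⟩ | ⟨k, h, hk1, hk2, hh, hneg⟩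
    · left
      refine ⟨k, h, hk1, hk2, hh, ?_⟩
      by_cases hhI : h ∈ I
      · exact lt_of_lt_of_le hpos (hp h hhI k hk1 hk2).1
      · rcases tri I hIconn h hhI with hlo | hhi
        · rw [Szero ν k h hlo] at hpos; omega
        · obtain ⟨j0, hj0⟩ := hJne
          have := hh j0 hj0
          have := hhi j0 (hJI hj0)
          omega
    · right
      refine ⟨k, h, hk1, hk2, hh, ?_⟩
      by_cases hhI : h ∈ I
      · have e1 := keyST ν hν k h
        have e2 := keyST μ hμ k h
        have e3 := (hp h hhI k hk1 hk2).1
        linarith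
      · rcases tri I hIconn h hhI with hlo | hhi
        · obtain ⟨j0, hj0⟩ := hJne
          have := hh j0 hj0
          have := hlo j0 (hJI hj0)
          omega
        · rw [Tzero ν k h hhi] at hneg; omega
  refine ⟨partA, ?_⟩
  -- Part (b)
  ext ν
  constructor
  · intro hν
    rw [hJset] at hν
    obtain ⟨hνL, hc⟩ := hν
    have Sz : ∀ (k : ℕ) (h : ℤ), (∀ j ∈ J, h < j) → S ν k h = 0 := by
      intro k h hh
      rw [hS]
      refine Finset.sum_eq_zero fun i _ => ?_
      have he : {j : ℤ | j ∈ Iplus ∧ j ≤ h ∧ ν i j ≠ c i} = ∅ := by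
        ext j
        simp only [Set.mem_setOf_eq, Set.mem_empty_iff_false, iff_false]
        rintro ⟨hjI, hjh, hjc⟩
        have hjJp : j ∈ Jplus := by
          by_contra hn
          exact hjc (hc i j hjI hn)
        rw [hJplus] at hjJp
        rcases hjJp with hj | ⟨x, hx, hxe⟩
        · have := hh j hj; omega
        · have hxe' : x + 1 = j := hxe
          have := hh x hx; omega
      rw [he]
      simp
    have Tz : ∀ (k : ℕ) (h : ℤ), (∀ j ∈ J, j < h) → T ν k h = 0 := by
      intro k h hh
      rw [hT]
      refine Finset.sum_eq_zero fun i _ => ?_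
      have he : {j : ℤ | j ∈ Iplus ∧ h < j ∧ ν i j ≠ c i} = ∅ := by
        ext j
        simp only [Set.mem_setOf_eq, Set.mem_empty_iff_false, iff_false]
        rintro ⟨hjI, hjh, hjc⟩
        have hjJp : j ∈ Jplus := by
          by_contra hn
          exact hjc (hc i j hjI hn)
        rw [hJplus] at hjJp
        rcases hjJp with hj | ⟨x, hx, hxe⟩
        · have := hh j hj; omega
        · have hxe' : x + 1 = j := hxe
          have := hh x hx; omega
      rw [he]
      simp
    constructor
    · rw [hLeJ]
      exact ⟨hνL, fun k hk1 hk2 h hh => (Sz k h hh).ge,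
        fun k hk1 hk2 h hh => (Tz k h hh).le⟩
    · rw [hLtJ]
      rintro ⟨-, ⟨k, h, hk1, hk2, hh, hpos⟩ | ⟨k, h, hk1, hk2, hh, hneg⟩⟩
      · rw [Sz k h hh] at hpos; omega
      · rw [Tz k h hh] at hneg; omega
  · rintro ⟨hLe', hnLt⟩
    have hmemLe : ν ∈ LamLeJ := hLe'
    rw [hLeJ] at hLe'
    obtain ⟨hνL, hc1, hc2⟩ := hLe'
    rw [hLtJ] at hnLt
    have Sz : ∀ k : ℕ, k ≤ l → ∀ h : ℤ, (∀ j ∈ J, h < j) → S ν k h = 0 := by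
      intro k hk2 h hh
      rcases Nat.eq_zero_or_pos k with rfl | hk1
      · rw [hS]; simp
      · refine le_antisymm ?_ (hc1 k hk1 hk2 h hh)
        by_contra hpos
        push_neg at hpos
        exact hnLt ⟨hmemLe, Or.inl ⟨k, h, hk1, hk2, hh, hpos⟩⟩
    have Tz : ∀ k : ℕ, k ≤ l → ∀ h : ℤ, (∀ j ∈ J, j < h) → T ν k h = 0 := by
      intro k hk2 h hh
      rcases Nat.eq_zero_or_pos k with rfl | hk1
      · rw [hT]; simp
      · refine le_antisymm (hc2 k hk1 hk2 h hh) ?_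
        by_contra hneg
        push_neg at hneg
        exact hnLt ⟨hmemLe, Or.inr ⟨k, h, hk1, hk2, hh, hneg⟩⟩
    rw [hJset]
    refine ⟨hνL, ?_⟩
    intro i j hjI hjnJ
    by_contra hne
    rw [hJplus] at hjnJ
    have hjJ : j ∉ J := fun h => hjnJ (Or.inl h)
    have hj1 : j - 1 ∉ J := fun h => hjnJ (Or.inr ⟨j - 1, h, by show j - 1 + 1 = j; omega⟩)
    have hfin : {j' : ℤ | j' ∈ Iplus ∧ j' ≤ j ∧ ν i j' ≠ c i}.Finite :=
      (hmem ν hνL i).1.subset (fun x hx => ⟨hx.1, hx.2.2⟩)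
    have hfin' : {j' : ℤ | j' ∈ Iplus ∧ j - 1 < j' ∧ ν i j' ≠ c i}.Finite :=
      (hmem ν hνL i).1.subset (fun x hx => ⟨hx.1, hx.2.2⟩)
    rcases tri J hJconn j hjJ with hlo | hhi
    · have z1 : S ν ((i : ℕ) + 1) j = 0 := Sz _ i.isLt j hlo
      have z2 : S ν (i : ℕ) j = 0 := Sz _ (le_of_lt i.isLt) j hlo
      have e1 := stepS ν j i
      rw [z1, z2] at e1
      have hX : ({j' : ℤ | j' ∈ Iplus ∧ j' ≤ j ∧ ν i j' ≠ c i}.ncard : ℤ) = 0 := by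
        split_ifs at e1 <;> omega
      have hXn : {j' : ℤ | j' ∈ Iplus ∧ j' ≤ j ∧ ν i j' ≠ c i}.ncard = 0 := by exact_mod_cast hX
      have hemp := (Set.ncard_eq_zero hfin).mp hXn
      have : j ∈ {j' : ℤ | j' ∈ Iplus ∧ j' ≤ j ∧ ν i j' ≠ c i} := ⟨hjI, le_refl j, hne⟩
      rw [hemp] at this
      exact this
    · have hlo' : ∀ a ∈ J, a < j - 1 := by
        intro a ha
        have h1 := hhi a ha
        have h2 : a ≠ j - 1 := fun h => hj1 (h ▸ ha)
        omega
      have z1 : T ν ((i : ℕ) + 1) (j - 1) = 0 := Tz _ i.isLt (j - 1) hlo'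
      have z2 : T ν (i : ℕ) (j - 1) = 0 := Tz _ (le_of_lt i.isLt) (j - 1) hlo'
      have e1 := stepT ν (j - 1) i
      rw [z1, z2] at e1
      have hX : ({j' : ℤ | j' ∈ Iplus ∧ j - 1 < j' ∧ ν i j' ≠ c i}.ncard : ℤ) = 0 := by
        split_ifs at e1 <;> omega
      have hXn : {j' : ℤ | j' ∈ Iplus ∧ j - 1 < j' ∧ ν i j' ≠ c i}.ncard = 0 := by
        exact_mod_cast hX
      have hemp := (Set.ncard_eq_zero hfin').mp hXn
      have : j ∈ {j' : ℤ | j' ∈ Iplus ∧ j - 1 < j' ∧ ν i j' ≠ c i} := ⟨hjI, by omega, hne⟩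
      rw [hemp] at this
      exact this
end

section
/- Let J be a finite interval with |J_+| ≥ 2·max(n_1,…,n_l), let λ ∈ Λ_{J;n,c} and set κ := κ_{J;n,c}. If every column of λ has the same number of entries 1 as the corresponding column of κ, i.e. #{i : λ_{ij} = 1} = #{i : κ_{ij} = 1} for every j ∈ J_+ (equivalently |λ| = |κ| as weights), then λ = κ. -/
/-- Lemma `we`: for a finite interval `J` with `|J₊| ≥ 2·max(n)` and
`λ ∈ Λ_{J;n,c}` having the same column sums as `κ = κ_{J;n,c}` (i.e. `|λ| = |κ|`),
one has `λ = κ`. -/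
theorem stmt_5
    (l : ℕ) (hl : 1 ≤ l) (n : Fin l → ℕ) (c : Fin l → Bool)
    (a b : ℤ) (hab : a ≤ b)
    (hbig : 2 * ((Finset.univ.sup n : ℕ) : ℤ) ≤ b - a + 2)
    (lam : Fin l → ℤ → Bool)
    (hlam : ∀ i, ((Finset.Icc a (b + 1)).filter (fun j => lam i j ≠ c i)).card = n i)
    (κ : Fin l → ℤ → Bool)
    (hκmem : ∀ i, ((Finset.Icc a (b + 1)).filter (fun j => κ i j ≠ c i)).card = n i)
    (hκdec : ∀ i, ∀ j ∈ Finset.Icc a (b + 1), ∀ j' ∈ Finset.Icc a (b + 1),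
      j ≤ j' → κ i j' = true → κ i j = true)
    (hcol : ∀ j ∈ Finset.Icc a (b + 1),
      (Finset.univ.filter (fun i : Fin l => lam i j = true)).card
        = (Finset.univ.filter (fun i : Fin l => κ i j = true)).card) :
    ∀ i, ∀ j ∈ Finset.Icc a (b + 1), lam i j = κ i j := by
  classical
  set I := Finset.Icc a (b + 1) with hIdef
  have hmemI : ∀ j : ℤ, j ∈ I ↔ a ≤ j ∧ j ≤ b + 1 := by
    intro j; rw [hIdef, Finset.mem_Icc]
  -- row totals agree
  have hrow : ∀ i, (I.filter (fun j => lam i j = true)).card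
      = (I.filter (fun j => κ i j = true)).card := by
    intro i
    have h1 := hlam i
    have h2 := hκmem i
    cases hc : c i
    · rw [hc] at h1 h2
      have e1 : I.filter (fun j => lam i j ≠ false) = I.filter (fun j => lam i j = true) := by
        apply Finset.filter_congr; intro j _; simp
      have e2 : I.filter (fun j => κ i j ≠ false) = I.filter (fun j => κ i j = true) := by
        apply Finset.filter_congr; intro j _; simp
      rw [e1] at h1; rw [e2] at h2; omega
    · rw [hc] at h1 h2
      have e1 : (I.filter (fun j => lam i j = true)).card
          + (I.filter (fun j => ¬ (lam i j = true))).card = I.card :=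
        Finset.card_filter_add_card_filter_not _
      have e2 : (I.filter (fun j => κ i j = true)).card
          + (I.filter (fun j => ¬ (κ i j = true))).card = I.card :=
        Finset.card_filter_add_card_filter_not _
      have f1 : I.filter (fun j => lam i j ≠ true) = I.filter (fun j => ¬ (lam i j = true)) := rfl
      have f2 : I.filter (fun j => κ i j ≠ true) = I.filter (fun j => ¬ (κ i j = true)) := rfl
      rw [f1] at h1; rw [f2] at h2; omega
  set m : Fin l → ℕ := fun i => (I.filter (fun j => κ i j = true)).card with hm
  have hIcard : I.card = (b + 1 + 1 - a).toNat := by rw [hIdef, Int.card_Icc]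
  have hmle : ∀ i, (m i : ℤ) ≤ b + 2 - a := by
    intro i
    have h := Finset.card_filter_le I (fun j => κ i j = true)
    rw [hIcard] at h
    have : m i ≤ (b + 1 + 1 - a).toNat := h
    omega
  -- characterization of κ
  have hκchar : ∀ i, ∀ j, j ∈ I → (κ i j = true ↔ j < a + (m i : ℤ)) := by
    intro i j hj
    rw [hmemI] at hj
    constructor
    · intro htrue
      have hsub : Finset.Icc a j ⊆ I.filter (fun j' => κ i j' = true) := by
        intro j'' hj''
        rw [Finset.mem_Icc] at hj''
        rw [Finset.mem_filter, hmemI]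
        refine ⟨⟨hj''.1, by omega⟩, ?_⟩
        exact hκdec i j'' (by rw [hmemI]; omega) j (by rw [hmemI]; omega) hj''.2 htrue
      have hc := Finset.card_le_card hsub
      rw [Int.card_Icc] at hc
      have : (j + 1 - a).toNat ≤ m i := hc
      omega
    · intro hlt
      by_contra hfalse
      have hf : κ i j = false := by
        cases hκ : κ i j
        · rfl
        · exact absurd hκ hfalse
      have hsub : I.filter (fun j' => κ i j' = true) ⊆ Finset.Icc a (j - 1) := by
        intro j' hj'
        rw [Finset.mem_filter, hmemI] at hj'
        rw [Finset.mem_Icc]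
        refine ⟨hj'.1.1, ?_⟩
        by_contra hgt
        push_neg at hgt
        have := hκdec i j (by rw [hmemI]; omega) j' (by rw [hmemI]; omega) (by omega) hj'.2
        rw [hf] at this; exact absurd this (by simp)
      have hc := Finset.card_le_card hsub
      rw [Int.card_Icc] at hc
      have : m i ≤ (j - 1 + 1 - a).toNat := hc
      omega
  -- partial counts of lam bounded by those of κ
  have hle : ∀ t : ℤ, t ≤ b + 1 → ∀ i,
      ((Finset.Icc a t).filter (fun j => lam i j = true)).card
        ≤ ((Finset.Icc a t).filter (fun j => κ i j = true)).card := by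
    intro t ht i
    by_cases hcase : a + (m i : ℤ) - 1 ≤ t
    · have h1 : ((Finset.Icc a t).filter (fun j => lam i j = true)).card ≤ m i := by
        have hsub : (Finset.Icc a t).filter (fun j => lam i j = true)
            ⊆ I.filter (fun j => lam i j = true) := by
          apply Finset.filter_subset_filter
          intro x hx; rw [Finset.mem_Icc] at hx; rw [hmemI]; omega
        have := Finset.card_le_card hsub
        rw [hrow i] at this
        exact this
      have h2 : m i ≤ ((Finset.Icc a t).filter (fun j => κ i j = true)).card := by
        have hsub : Finset.Icc a (a + (m i : ℤ) - 1)
            ⊆ (Finset.Icc a t).filter (fun j => κ i j = true) := by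
          intro j hj
          rw [Finset.mem_Icc] at hj
          have hmI := hmle i
          rw [Finset.mem_filter, Finset.mem_Icc]
          refine ⟨⟨hj.1, by omega⟩, ?_⟩
          exact (hκchar i j (by rw [hmemI]; omega)).mpr (by omega)
        have hc := Finset.card_le_card hsub
        rw [Int.card_Icc] at hc
        have he : (a + (m i : ℤ) - 1 + 1 - a).toNat = m i := by omega
        rw [he] at hc
        exact hc
      omega
    · push_neg at hcase
      have heq : (Finset.Icc a t).filter (fun j => κ i j = true) = Finset.Icc a t := by
        apply Finset.filter_true_of_mem
        intro j hj
        rw [Finset.mem_Icc] at hj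
        exact (hκchar i j (by rw [hmemI]; omega)).mpr (by omega)
      rw [heq]
      exact Finset.card_filter_le _ _
  -- partial counts are equal
  have hsum : ∀ t : ℤ, t ≤ b + 1 → ∀ i,
      ((Finset.Icc a t).filter (fun j => lam i j = true)).card
        = ((Finset.Icc a t).filter (fun j => κ i j = true)).card := by
    intro t ht
    have hswapl : ∑ j ∈ Finset.Icc a t, (Finset.univ.filter (fun i : Fin l => lam i j = true)).card
        = ∑ i : Fin l, ((Finset.Icc a t).filter (fun j => lam i j = true)).card := by
      simp only [Finset.card_filter]
      exact Finset.sum_comm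
    have hswapk : ∑ j ∈ Finset.Icc a t, (Finset.univ.filter (fun i : Fin l => κ i j = true)).card
        = ∑ i : Fin l, ((Finset.Icc a t).filter (fun j => κ i j = true)).card := by
      simp only [Finset.card_filter]
      exact Finset.sum_comm
    have hcols : ∑ j ∈ Finset.Icc a t, (Finset.univ.filter (fun i : Fin l => lam i j = true)).card
        = ∑ j ∈ Finset.Icc a t, (Finset.univ.filter (fun i : Fin l => κ i j = true)).card := by
      apply Finset.sum_congr rfl
      intro j hj
      rw [Finset.mem_Icc] at hj
      exact hcol j (by rw [hmemI]; omega)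
    have htot : ∑ i : Fin l, ((Finset.Icc a t).filter (fun j => lam i j = true)).card
        = ∑ i : Fin l, ((Finset.Icc a t).filter (fun j => κ i j = true)).card := by
      rw [← hswapl, hcols, hswapk]
    intro i
    exact (Finset.sum_eq_sum_iff_of_le (fun i _ => hle t ht i)).mp htot i (Finset.mem_univ i)
  -- conclude entrywise
  intro i₀ j₀ hj₀
  rw [hmemI] at hj₀
  have e1 := hsum j₀ (by omega) i₀
  have e2 := hsum (j₀ - 1) (by omega) i₀
  have hins : Finset.Icc a j₀ = insert j₀ (Finset.Icc a (j₀ - 1)) := by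
    ext x; simp only [Finset.mem_Icc, Finset.mem_insert]; omega
  have hnml : j₀ ∉ (Finset.Icc a (j₀ - 1)).filter (fun j => lam i₀ j = true) := by
    intro h; rw [Finset.mem_filter, Finset.mem_Icc] at h; omega
  have hnmk : j₀ ∉ (Finset.Icc a (j₀ - 1)).filter (fun j => κ i₀ j = true) := by
    intro h; rw [Finset.mem_filter, Finset.mem_Icc] at h; omega
  rw [hins, Finset.filter_insert, Finset.filter_insert] at e1
  cases hL : lam i₀ j₀ <;> cases hK : κ i₀ j₀
  · rfl
  · rw [hL, hK] at e1
    simp only [Bool.false_eq_true, if_false, if_true] at e1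
    rw [Finset.card_insert_of_notMem hnmk] at e1
    omega
  · rw [hL, hK] at e1
    simp only [Bool.false_eq_true, if_false, if_true] at e1
    rw [Finset.card_insert_of_notMem hnml] at e1
    omega
  · rfl
end

section
/- Let λ, μ ∈ ℤ^N and suppose μ ↑ λ, meaning that one of the following holds: (a) there exist 1 ≤ i < j ≤ N with p_i = p_j and (λ+ρ)_i > (λ+ρ)_j such that μ + ρ is obtained from λ + ρ by interchanging the i-th and j-th coordinates (i.e. μ = s_α·λ for the even positive root α = δ_i − δ_j with (λ+ρ, α^∨) > 0); or (b) there exist 1 ≤ i < j ≤ N with p_i ≠ p_j and (λ+ρ)_i + (λ+ρ)_j = 0 such that μ = λ − e_i + e_j (i.e. μ = λ − β for the odd positive root β = δ_i − δ_j with (λ+ρ, β) = 0). Then μ ≤ λ in the Bruhat order. -/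
private lemma aux_sum (N k : ℕ) (F G : Fin N → ℤ) (i j : Fin N) (hij : i ≠ j)
    (hFG : ∀ l, l ≠ i → l ≠ j → F l = G l) :
    ∑ l ∈ Finset.univ.filter (fun l : Fin N => (l : ℕ) < k), F l
      - ∑ l ∈ Finset.univ.filter (fun l : Fin N => (l : ℕ) < k), G l
    = (if (i : ℕ) < k then F i - G i else 0)
      + (if (j : ℕ) < k then F j - G j else 0) := by
  rw [← Finset.sum_sub_distrib]
  have hpt : ∀ l, F l - G l =
      (if l = i then F i - G i else 0) + (if l = j then F j - G j else 0) := by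
    intro l
    by_cases h1 : l = i
    · subst h1; simp [hij]
    · by_cases h2 : l = j
      · subst h2; simp [h1]
      · simp [h1, h2, hFG l h1 h2]
  rw [Finset.sum_congr rfl (fun l _ => hpt l), Finset.sum_add_distrib,
    Finset.sum_ite_eq', Finset.sum_ite_eq']
  simp

private lemma conclude (S T : ℤ) (i j k N : ℕ) (hij : i < j) (hjN : j < N)
    (d : ℤ) (hd : d ≤ 0)
    (hkey : S - T = (if i < k then d else 0) + (if j < k then -d else 0)) :
    S ≤ T ∧ (k = N → T = S) := by
  constructor
  · split_ifs at hkey <;> omega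
  · intro hkN; subst hkN
    rw [if_pos (by omega), if_pos hjN] at hkey
    omega
/-- if `μ ↑ λ` (via an even reflection `s_α·λ` with `(λ+ρ, α^∨) > 0`, or
via `λ − β` for an odd positive root `β` with `(λ+ρ, β) = 0`), then `μ ≤ λ` in the
Bruhat order. -/
theorem stmt_8
    (N : ℕ) (hN : 1 ≤ N) (p : Fin N → ℕ) (hp : ∀ i, p i ≤ 1)
    (ρ : Fin N → ℤ)
    (hρ : ∀ j : Fin N, ρ j = -(∑ i ∈ Finset.univ.filter (fun i : Fin N => i < j),
        (-1 : ℤ) ^ (p i + p j)) - (if p j = 1 then 1 else 0))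
    (Ssum : (Fin N → ℤ) → ℕ → ℤ → ℤ)
    (hSsum : ∀ ν k h, Ssum ν k h = ∑ i ∈ Finset.univ.filter
        (fun i : Fin N => (i : ℕ) < k ∧ (-1 : ℤ) ^ (p i) * (ν i + ρ i) ≤ h),
      (-1 : ℤ) ^ (p i))
    (bruhat : (Fin N → ℤ) → (Fin N → ℤ) → Prop)
    (hbruhat : ∀ ν μ, bruhat ν μ ↔ ∀ h : ℤ, ∀ k : ℕ, 1 ≤ k → k ≤ N →
        Ssum μ k h ≤ Ssum ν k h ∧ (k = N → Ssum ν k h = Ssum μ k h))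
    (lam mu : Fin N → ℤ)
    (hup :
      (∃ i j : Fin N, i < j ∧ p i = p j ∧ lam j + ρ j < lam i + ρ i ∧
        mu i + ρ i = lam j + ρ j ∧ mu j + ρ j = lam i + ρ i ∧
        (∀ k : Fin N, k ≠ i → k ≠ j → mu k + ρ k = lam k + ρ k)) ∨
      (∃ i j : Fin N, i < j ∧ p i ≠ p j ∧ (lam i + ρ i) + (lam j + ρ j) = 0 ∧
        ∀ k : Fin N, mu k = lam k - (if k = i then 1 else 0) + (if k = j then 1 else 0))) :
    bruhat mu lam := by
  rw [hbruhat]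
  intro h k hk1 hkN
  -- rewrite Ssum as a sum over the cutoff filter with an `if`-valued summand
  have ssum_eq : ∀ ν : Fin N → ℤ, Ssum ν k h =
      ∑ l ∈ Finset.univ.filter (fun l : Fin N => (l : ℕ) < k),
        (if (-1 : ℤ) ^ (p l) * (ν l + ρ l) ≤ h then (-1 : ℤ) ^ (p l) else 0) := by
    intro ν
    rw [hSsum, Finset.sum_filter, Finset.sum_filter]
    refine Finset.sum_congr rfl (fun l _ => ?_)
    by_cases h1 : (l : ℕ) < k <;> simp [h1]
  rcases hup with ⟨i, j, hij, hpij, hlt, hmi, hmj, hoth⟩ |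
      ⟨i, j, hij, hpij, hsum, hmu⟩
  · -- even case
    set F : Fin N → ℤ := fun l =>
      if (-1 : ℤ) ^ (p l) * (lam l + ρ l) ≤ h then (-1 : ℤ) ^ (p l) else 0 with hF
    set G : Fin N → ℤ := fun l =>
      if (-1 : ℤ) ^ (p l) * (mu l + ρ l) ≤ h then (-1 : ℤ) ^ (p l) else 0 with hG
    have hFG : ∀ l, l ≠ i → l ≠ j → F l = G l := by
      intro l h1 h2
      simp only [hF, hG, hoth l h1 h2]
    have hdiff := aux_sum N k F G i j (Fin.ne_of_lt hij) hFG
    have hε : (-1 : ℤ) ^ (p i) = 1 ∨ (-1 : ℤ) ^ (p i) = -1 := by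
      have := hp i
      interval_cases hpi : p i <;> simp
    have hFGj : F j - G j = -(F i - G i) := by
      simp only [hF, hG, hmi, hmj, ← hpij]
      ring
    have hd : F i - G i ≤ 0 := by
      simp only [hF, hG, hmi]
      rcases hε with hε | hε <;> rw [hε] <;> split_ifs <;> omega
    rw [hFGj] at hdiff
    exact conclude _ _ i j k N hij j.isLt (F i - G i) hd
      (by rw [ssum_eq lam, ssum_eq mu]; exact hdiff)
  · -- odd case
    have hij' : i ≠ j := Fin.ne_of_lt hij
    have hmui : mu i = lam i - 1 := by have := hmu i; simpa [hij'] using this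
    have hmuj : mu j = lam j + 1 := by
      have := hmu j; simpa [hij'.symm] using this
    set F : Fin N → ℤ := fun l =>
      if (-1 : ℤ) ^ (p l) * (lam l + ρ l) ≤ h then (-1 : ℤ) ^ (p l) else 0 with hF
    set G : Fin N → ℤ := fun l =>
      if (-1 : ℤ) ^ (p l) * (mu l + ρ l) ≤ h then (-1 : ℤ) ^ (p l) else 0 with hG
    have hFG : ∀ l, l ≠ i → l ≠ j → F l = G l := by
      intro l h1 h2
      have : mu l = lam l := by have := hmu l; simpa [h1, h2] using this
      simp only [hF, hG, this]
    have hdiff := aux_sum N k F G i j hij' hFG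
    have hcase : (p i = 0 ∧ p j = 1) ∨ (p i = 1 ∧ p j = 0) := by
      have := hp i; have := hp j; omega
    have hb : lam j + ρ j = -(lam i + ρ i) := by omega
    rcases hcase with ⟨h0, h1⟩ | ⟨h0, h1⟩
    · have hFGj : F j - G j = -(F i - G i) := by
        simp only [hF, hG, h0, h1, hmui, hmuj, hb]
        ring_nf
        split_ifs with c1 c2 c3 c4 c5 c6 <;> omega
      have hd : F i - G i ≤ 0 := by
        simp only [hF, hG, h0, hmui]
        split_ifs <;> omega
      rw [hFGj] at hdiff
      exact conclude _ _ i j k N hij j.isLt (F i - G i) hd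
        (by rw [ssum_eq lam, ssum_eq mu]; exact hdiff)
    · have hFGj : F j - G j = -(F i - G i) := by
        simp only [hF, hG, h0, h1, hmui, hmuj, hb]
        ring_nf
        split_ifs with c1 c2 c3 c4 c5 c6 <;> omega
      have hd : F i - G i ≤ 0 := by
        simp only [hF, hG, h0, hmui]
        split_ifs <;> omega
      rw [hFGj] at hdiff
      exact conclude _ _ i j k N hij j.isLt (F i - G i) hd
        (by rw [ssum_eq lam, ssum_eq mu]; exact hdiff)
end

section
/- Let λ, μ ∈ ℤ^N with λ ≤ μ in the Bruhat order. Then λ ⊴ μ in the dominance order, i.e. μ − λ is an ℕ-linear combination of the vectors e_i − e_j for 1 ≤ i < j ≤ N (equivalently, Σ_{i=1}^h (μ_i − λ_i) ≥ 0 for every 1 ≤ h ≤ N, with equality at h = N). -/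
/-- the Bruhat order refines the dominance order: if `λ ≤ μ` in the
Bruhat order then `Σ_{i=1}^h (μᵢ − λᵢ) ≥ 0` for every `1 ≤ h ≤ N`, with equality
at `h = N`. -/
theorem stmt_9
    (N : ℕ) (hN : 1 ≤ N) (p : Fin N → ℕ) (hp : ∀ i, p i ≤ 1)
    (ρ : Fin N → ℤ)
    (hρ : ∀ j : Fin N, ρ j = -(∑ i ∈ Finset.univ.filter (fun i : Fin N => i < j),
        (-1 : ℤ) ^ (p i + p j)) - (if p j = 1 then 1 else 0))
    (Ssum : (Fin N → ℤ) → ℕ → ℤ → ℤ)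
    (hSsum : ∀ ν k h, Ssum ν k h = ∑ i ∈ Finset.univ.filter
        (fun i : Fin N => (i : ℕ) < k ∧ (-1 : ℤ) ^ (p i) * (ν i + ρ i) ≤ h),
      (-1 : ℤ) ^ (p i))
    (bruhat : (Fin N → ℤ) → (Fin N → ℤ) → Prop)
    (hbruhat : ∀ ν μ, bruhat ν μ ↔ ∀ h : ℤ, ∀ k : ℕ, 1 ≤ k → k ≤ N →
        Ssum μ k h ≤ Ssum ν k h ∧ (k = N → Ssum ν k h = Ssum μ k h))
    (lam mu : Fin N → ℤ) (hle : bruhat lam mu) :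
    ∀ h : ℕ, 1 ≤ h → h ≤ N →
      0 ≤ (∑ i ∈ Finset.univ.filter (fun i : Fin N => (i : ℕ) < h), (mu i - lam i))
      ∧ (h = N →
        (∑ i ∈ Finset.univ.filter (fun i : Fin N => (i : ℕ) < h), (mu i - lam i)) = 0) := by
  intro k hk1 hkN
  set s : Finset (Fin N) := Finset.univ.filter (fun i : Fin N => (i : ℕ) < k) with hs_def
  have hsne : s.Nonempty := ⟨⟨0, by omega⟩, by simp [hs_def]; omega⟩
  set A : Fin N → ℤ := fun i => (-1 : ℤ) ^ (p i) * (lam i + ρ i) with hA_def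
  set B : Fin N → ℤ := fun i => (-1 : ℤ) ^ (p i) * (mu i + ρ i) with hB_def
  set T : Finset ℤ := s.image A ∪ s.image B with hT_def
  have hTne : T.Nonempty := by
    rcases hsne with ⟨i, hi⟩
    exact ⟨A i, by simp [hT_def]; exact Or.inl ⟨i, hi, rfl⟩⟩
  set L : ℤ := T.min' hTne with hL_def
  set H : ℤ := T.max' hTne with hH_def
  have hAL : ∀ i ∈ s, L ≤ A i ∧ A i ≤ H := by
    intro i hi
    have hmem : A i ∈ T := by simp [hT_def]; exact Or.inl ⟨i, hi, rfl⟩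
    exact ⟨T.min'_le _ hmem, T.le_max' _ hmem⟩
  have hBL : ∀ i ∈ s, L ≤ B i ∧ B i ≤ H := by
    intro i hi
    have hmem : B i ∈ T := by simp [hT_def]; exact Or.inr ⟨i, hi, rfl⟩
    exact ⟨T.min'_le _ hmem, T.le_max' _ hmem⟩
  -- key computation
  have key : ∀ (C : Fin N → ℤ), (∀ i ∈ s, L ≤ C i ∧ C i ≤ H) →
      (∑ h ∈ Finset.Icc L H, ∑ i ∈ Finset.univ.filter
          (fun i : Fin N => (i : ℕ) < k ∧ C i ≤ h), (-1 : ℤ) ^ (p i))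
      = ∑ i ∈ s, (-1 : ℤ) ^ (p i) * (H + 1 - C i) := by
    intro C hC
    have step1 : ∀ h : ℤ, (Finset.univ.filter
        (fun i : Fin N => (i : ℕ) < k ∧ C i ≤ h)) = s.filter (fun i => C i ≤ h) := by
      intro h; ext i; simp [hs_def, Finset.mem_filter, and_assoc]
    calc (∑ h ∈ Finset.Icc L H, ∑ i ∈ Finset.univ.filter
          (fun i : Fin N => (i : ℕ) < k ∧ C i ≤ h), (-1 : ℤ) ^ (p i))
        = ∑ h ∈ Finset.Icc L H, ∑ i ∈ s, (if C i ≤ h then (-1 : ℤ) ^ (p i) else 0) := by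
          refine Finset.sum_congr rfl fun h _ => ?_
          rw [step1 h, Finset.sum_filter]
      _ = ∑ i ∈ s, ∑ h ∈ Finset.Icc L H, (if C i ≤ h then (-1 : ℤ) ^ (p i) else 0) :=
          Finset.sum_comm
      _ = ∑ i ∈ s, (-1 : ℤ) ^ (p i) * (H + 1 - C i) := by
          refine Finset.sum_congr rfl fun i hi => ?_
          obtain ⟨hL, hH⟩ := hC i hi
          rw [← Finset.sum_filter]
          have hf : (Finset.Icc L H).filter (fun h => C i ≤ h) = Finset.Icc (C i) H := by
            ext h; simp [Finset.mem_Icc]; omega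
          rw [hf, Finset.sum_const, Int.card_Icc]
          rw [nsmul_eq_mul, Int.toNat_of_nonneg (by omega)]
          ring
  have hbr := (hbruhat lam mu).mp hle
  have hdiff : (∑ h ∈ Finset.Icc L H, (Ssum lam k h - Ssum mu k h))
      = ∑ i ∈ s, (mu i - lam i) := by
    rw [Finset.sum_sub_distrib]
    have e1 : (∑ h ∈ Finset.Icc L H, Ssum lam k h) = ∑ i ∈ s, (-1 : ℤ) ^ (p i) * (H + 1 - A i) := by
      rw [Finset.sum_congr rfl fun h _ => hSsum lam k h]
      exact key A hAL
    have e2 : (∑ h ∈ Finset.Icc L H, Ssum mu k h) = ∑ i ∈ s, (-1 : ℤ) ^ (p i) * (H + 1 - B i) := by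
      rw [Finset.sum_congr rfl fun h _ => hSsum mu k h]
      exact key B hBL
    rw [e1, e2, ← Finset.sum_sub_distrib]
    refine Finset.sum_congr rfl fun i _ => ?_
    have hsq : (-1 : ℤ) ^ (p i) * (-1 : ℤ) ^ (p i) = 1 := by
      rw [← pow_add]
      exact Even.neg_one_pow ⟨p i, rfl⟩
    calc (-1 : ℤ) ^ (p i) * (H + 1 - A i) - (-1 : ℤ) ^ (p i) * (H + 1 - B i)
        = (-1 : ℤ) ^ (p i) * ((-1 : ℤ) ^ (p i) * (mu i - lam i)) := by
          simp only [hA_def, hB_def]; ring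
      _ = mu i - lam i := by rw [← mul_assoc, hsq, one_mul]
  constructor
  · rw [← hdiff]
    exact Finset.sum_nonneg fun h _ => by
      have := (hbr h k hk1 hkN).1; omega
  · intro hkNeq
    rw [← hdiff]
    refine Finset.sum_eq_zero fun h _ => ?_
    have := (hbr h k hk1 hkN).2 hkNeq
    omega
end

section
/- The Bruhat relation ≤ is a partial order on ℤ^N: it is reflexive and transitive, and if λ ≤ μ and μ ≤ λ then λ = μ. -/
/-- the Bruhat relation `≤` is a partial order on `ℤ^N`: reflexive,
transitive and antisymmetric. -/
theorem stmt_10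
    (N : ℕ) (hN : 1 ≤ N) (p : Fin N → ℕ) (hp : ∀ i, p i ≤ 1)
    (ρ : Fin N → ℤ)
    (hρ : ∀ j : Fin N, ρ j = -(∑ i ∈ Finset.univ.filter (fun i : Fin N => i < j),
        (-1 : ℤ) ^ (p i + p j)) - (if p j = 1 then 1 else 0))
    (Ssum : (Fin N → ℤ) → ℕ → ℤ → ℤ)
    (hSsum : ∀ ν k h, Ssum ν k h = ∑ i ∈ Finset.univ.filter
        (fun i : Fin N => (i : ℕ) < k ∧ (-1 : ℤ) ^ (p i) * (ν i + ρ i) ≤ h),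
      (-1 : ℤ) ^ (p i))
    (bruhat : (Fin N → ℤ) → (Fin N → ℤ) → Prop)
    (hbruhat : ∀ ν μ, bruhat ν μ ↔ ∀ h : ℤ, ∀ k : ℕ, 1 ≤ k → k ≤ N →
        Ssum μ k h ≤ Ssum ν k h ∧ (k = N → Ssum ν k h = Ssum μ k h)) :
    (∀ lam : Fin N → ℤ, bruhat lam lam)
    ∧ (∀ lam mu nu : Fin N → ℤ, bruhat lam mu → bruhat mu nu → bruhat lam nu)
    ∧ (∀ lam mu : Fin N → ℤ, bruhat lam mu → bruhat mu lam → lam = mu) := by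
  have step : ∀ (ν : Fin N → ℤ) (i : Fin N) (h : ℤ),
      Ssum ν ((i : ℕ) + 1) h - Ssum ν (i : ℕ) h =
        (if (-1:ℤ)^(p i) * (ν i + ρ i) ≤ h then (-1:ℤ)^(p i) else 0) := by
    intro ν i h
    rw [hSsum, hSsum]
    by_cases hc : (-1:ℤ)^(p i) * (ν i + ρ i) ≤ h
    · rw [if_pos hc]
      have hset : Finset.univ.filter
          (fun j : Fin N => (j:ℕ) < (i:ℕ)+1 ∧ (-1:ℤ)^(p j) * (ν j + ρ j) ≤ h)
          = insert i (Finset.univ.filter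
            (fun j : Fin N => (j:ℕ) < (i:ℕ) ∧ (-1:ℤ)^(p j) * (ν j + ρ j) ≤ h)) := by
        ext j
        simp only [Finset.mem_filter, Finset.mem_insert, Finset.mem_univ, true_and]
        constructor
        · rintro ⟨hj1, hj2⟩
          rcases Nat.lt_succ_iff_lt_or_eq.mp hj1 with h' | h'
          · exact Or.inr ⟨h', hj2⟩
          · exact Or.inl (Fin.ext h')
        · rintro (rfl | ⟨hj1, hj2⟩)
          · exact ⟨Nat.lt_succ_self _, hc⟩
          · exact ⟨Nat.lt_succ_of_lt hj1, hj2⟩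
      rw [hset, Finset.sum_insert (by simp)]
      ring
    · rw [if_neg hc]
      have hset : Finset.univ.filter
          (fun j : Fin N => (j:ℕ) < (i:ℕ)+1 ∧ (-1:ℤ)^(p j) * (ν j + ρ j) ≤ h)
          = Finset.univ.filter
            (fun j : Fin N => (j:ℕ) < (i:ℕ) ∧ (-1:ℤ)^(p j) * (ν j + ρ j) ≤ h) := by
        ext j
        simp only [Finset.mem_filter, Finset.mem_univ, true_and]
        constructor
        · rintro ⟨hj1, hj2⟩
          rcases Nat.lt_succ_iff_lt_or_eq.mp hj1 with h' | h'
          · exact ⟨h', hj2⟩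
          · have : j = i := Fin.ext h'
            subst this; exact absurd hj2 hc
        · rintro ⟨hj1, hj2⟩
          exact ⟨Nat.lt_succ_of_lt hj1, hj2⟩
      rw [hset]; ring
  have zero : ∀ (ν : Fin N → ℤ) (h : ℤ), Ssum ν 0 h = 0 := by
    intro ν h
    rw [hSsum]
    simp
  refine ⟨?_, ?_, ?_⟩
  · intro lam
    rw [hbruhat]
    exact fun h k _ _ => ⟨le_refl _, fun _ => rfl⟩
  · intro lam mu nu h1 h2
    rw [hbruhat] at h1 h2 ⊢
    intro h k hk1 hk2
    obtain ⟨a1, b1⟩ := h1 h k hk1 hk2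
    obtain ⟨a2, b2⟩ := h2 h k hk1 hk2
    exact ⟨le_trans a2 a1, fun hkN => (b1 hkN).trans (b2 hkN)⟩
  · intro lam mu h1 h2
    rw [hbruhat] at h1 h2
    have eqS : ∀ (k : ℕ), k ≤ N → ∀ h : ℤ, Ssum lam k h = Ssum mu k h := by
      intro k hk h
      rcases Nat.eq_zero_or_pos k with rfl | hk1
      · rw [zero, zero]
      · exact le_antisymm ((h2 h k hk1 hk).1) ((h1 h k hk1 hk).1)
    have key : ∀ (i : Fin N) (h : ℤ),
        ((-1:ℤ)^(p i) * (lam i + ρ i) ≤ h ↔ (-1:ℤ)^(p i) * (mu i + ρ i) ≤ h) := by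
      intro i h
      have e1 := step lam i h
      have e2 := step mu i h
      rw [eqS ((i:ℕ)+1) i.isLt h, eqS (i:ℕ) (le_of_lt i.isLt) h] at e1
      rw [e2] at e1
      have hne : (-1:ℤ)^(p i) ≠ 0 := by positivity
      by_cases c1 : (-1:ℤ)^(p i) * (lam i + ρ i) ≤ h <;>
        by_cases c2 : (-1:ℤ)^(p i) * (mu i + ρ i) ≤ h <;>
        simp [c1, c2] at e1 ⊢ <;> tauto
    funext i
    have h1' := (key i ((-1:ℤ)^(p i) * (lam i + ρ i))).mp (le_refl _)
    have h2' := (key i ((-1:ℤ)^(p i) * (mu i + ρ i))).mpr (le_refl _)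
    have heq : (-1:ℤ)^(p i) * (lam i + ρ i) = (-1:ℤ)^(p i) * (mu i + ρ i) :=
      le_antisymm h2' h1'
    have hne : (-1:ℤ)^(p i) ≠ 0 := by positivity
    have := mul_left_cancel₀ hne heq
    linarith
end

section
/- Let Λ := {λ ∈ ℤ^N : (−1)^{c_k}(λ+ρ, δ_i − δ_{i+1}) > 0 for every 1 ≤ k ≤ l and every i with n_1+⋯+n_{k−1} < i < n_1+⋯+n_k}. For λ, μ ∈ Λ we have λ ≤ μ in the Bruhat order if and only if for every h ∈ ℤ and every 1 ≤ k ≤ l, Σ_{1≤i≤n_1+⋯+n_k, (λ+ρ,δ_i) ≤ h} (−1)^{p_i} ≥ Σ_{1≤i≤n_1+⋯+n_k, (μ+ρ,δ_i) ≤ h} (−1)^{p_i}, with equality whenever k = l. -/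
private lemma genEq (f : ℕ → ℤ) (r : ℤ) (A B : ℕ)
    (h : ∀ j, A ≤ j → j < B → f (j+1) = f j + r) :
    ∀ j, A ≤ j → j ≤ B → f j = f A + r * ((j:ℤ) - (A:ℤ)) := by
  intro j hA
  induction j, hA using Nat.le_induction with
  | base => intro _; simp
  | succ m hm ih =>
    intro hB
    have h1 := h m hm (by omega)
    have h2 := ih (by omega)
    have e : r * ((m:ℤ) + 1 - (A:ℤ)) = r * ((m:ℤ) - (A:ℤ)) + r := by ring
    push_cast
    linarith

private lemma genA (f : ℕ → ℤ) (s : ℤ) (A B : ℕ)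
    (h : ∀ j, A ≤ j → j < B → f j + s ≤ f (j+1)) :
    ∀ j, A ≤ j → j ≤ B → f A + s * ((j:ℤ) - (A:ℤ)) ≤ f j := by
  intro j hA
  induction j, hA using Nat.le_induction with
  | base => intro _; simp
  | succ m hm ih =>
    intro hB
    have h1 := h m hm (by omega)
    have h2 := ih (by omega)
    have e : s * ((m:ℤ) + 1 - (A:ℤ)) = s * ((m:ℤ) - (A:ℤ)) + s := by ring
    push_cast
    linarith

private lemma genB (f : ℕ → ℤ) (t : ℤ) (A B : ℕ)
    (h : ∀ j, A ≤ j → j < B → f (j+1) ≤ f j + t) :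
    ∀ j, A ≤ j → j ≤ B → f j ≤ f A + t * ((j:ℤ) - (A:ℤ)) := by
  intro j hA
  induction j, hA using Nat.le_induction with
  | base => intro _; simp
  | succ m hm ih =>
    intro hB
    have h1 := h m hm (by omega)
    have h2 := ih (by omega)
    have e : t * ((m:ℤ) + 1 - (A:ℤ)) = t * ((m:ℤ) - (A:ℤ)) + t := by ring
    push_cast
    linarith

private lemma genDisj (f : ℕ → ℤ) (s t : ℤ) (A B : ℕ)
    (hval : ∀ j, A ≤ j → j < B → f (j+1) = f j + s ∨ f (j+1) = f j + t)
    (hmono : ∀ i j, A ≤ i → i ≤ j → j < B → f (i+1) = f i + t → f (j+1) = f j + t) :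
    ∀ j, A ≤ j → j ≤ B →
      f j = f A + s * ((j:ℤ) - (A:ℤ)) ∨ f B = f j + t * ((B:ℤ) - (j:ℤ)) := by
  intro j h1 h2
  by_cases hall : ∀ i, A ≤ i → i < j → f (i+1) = f i + s
  · exact Or.inl (genEq f s A j hall j h1 le_rfl)
  · right
    push_neg at hall
    obtain ⟨i, hiA, hij, hne⟩ := hall
    have hit : f (i+1) = f i + t := (hval i hiA (by omega)).resolve_left hne
    exact genEq f t j B (fun m hm1 hm2 => hmono i m hiA (by omega) hm2 hit) B h2 le_rfl

private lemma combine (fl fm : ℕ → ℤ) (s t : ℤ) (A B : ℕ)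
    (hvalm : ∀ j, A ≤ j → j < B → fm (j+1) = fm j + s ∨ fm (j+1) = fm j + t)
    (hmonom : ∀ i j, A ≤ i → i ≤ j → j < B → fm (i+1) = fm i + t → fm (j+1) = fm j + t)
    (hlol : ∀ j, A ≤ j → j < B → fl j + s ≤ fl (j+1))
    (hhil : ∀ j, A ≤ j → j < B → fl (j+1) ≤ fl j + t)
    (hA : fm A ≤ fl A) (hB : fm B ≤ fl B) :
    ∀ j, A ≤ j → j ≤ B → fm j ≤ fl j := by
  intro j h1 h2
  rcases genDisj fm s t A B hvalm hmonom j h1 h2 with h | h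
  · have := genA fl s A B hlol j h1 h2
    linarith
  · have := genB fl t j B (fun m hm1 hm2 => hhil m (le_trans h1 hm1) hm2) B h2 le_rfl
    linarith

/-- Lemma `orderdesc`: for `λ, μ ∈ Λ` the Bruhat order is detected by
the partial sums over the block prefixes `n₁ + ⋯ + n_k` only. -/
theorem stmt_12
    (l : ℕ) (hl : 1 ≤ l) (n : Fin l → ℕ) (c : Fin l → ℕ) (hc : ∀ k, c k ≤ 1)
    (N : ℕ) (hNdef : N = ∑ k, n k) (hNpos : 1 ≤ N)
    (Nsum : ℕ → ℕ)
    (hNsum : ∀ k, Nsum k = ∑ t ∈ Finset.univ.filter (fun t : Fin l => (t : ℕ) < k), n t)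
    (p : Fin N → ℕ)
    (hp : ∀ (i : Fin N) (k : Fin l),
      Nsum (k : ℕ) ≤ (i : ℕ) → (i : ℕ) < Nsum (k : ℕ) + n k → p i = c k)
    (ρ : Fin N → ℤ)
    (hρ : ∀ j : Fin N, ρ j = -(∑ i ∈ Finset.univ.filter (fun i : Fin N => i < j),
        (-1 : ℤ) ^ (p i + p j)) - (if p j = 1 then 1 else 0))
    (Lam : Set (Fin N → ℤ))
    (hLam : Lam = {lam | ∀ (k : Fin l) (i j : Fin N), (j : ℕ) = (i : ℕ) + 1 →
        Nsum (k : ℕ) ≤ (i : ℕ) → (j : ℕ) < Nsum (k : ℕ) + n k →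
        0 < (-1 : ℤ) ^ (c k) *
          ((-1 : ℤ) ^ (p i) * (lam i + ρ i) - (-1 : ℤ) ^ (p j) * (lam j + ρ j))})
    (Ssum : (Fin N → ℤ) → ℕ → ℤ → ℤ)
    (hSsum : ∀ ν k h, Ssum ν k h = ∑ i ∈ Finset.univ.filter
        (fun i : Fin N => (i : ℕ) < k ∧ (-1 : ℤ) ^ (p i) * (ν i + ρ i) ≤ h),
      (-1 : ℤ) ^ (p i))
    (bruhat : (Fin N → ℤ) → (Fin N → ℤ) → Prop)
    (hbruhat : ∀ ν μ, bruhat ν μ ↔ ∀ h : ℤ, ∀ k : ℕ, 1 ≤ k → k ≤ N →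
        Ssum μ k h ≤ Ssum ν k h ∧ (k = N → Ssum ν k h = Ssum μ k h))
    (lam mu : Fin N → ℤ) (hlam : lam ∈ Lam) (hmu : mu ∈ Lam) :
    bruhat lam mu ↔ ∀ h : ℤ, ∀ k : ℕ, 1 ≤ k → k ≤ l →
      Ssum mu (Nsum k) h ≤ Ssum lam (Nsum k) h ∧
      (k = l → Ssum lam (Nsum k) h = Ssum mu (Nsum k) h) := by
  -- basic facts about Nsum
  have hNsum0 : Nsum 0 = 0 := by rw [hNsum]; simp
  have hNmono : ∀ a b : ℕ, a ≤ b → Nsum a ≤ Nsum b := by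
    intro a b hab
    rw [hNsum, hNsum]
    apply Finset.sum_le_sum_of_subset
    intro t ht
    simp only [Finset.mem_filter] at *
    exact ⟨ht.1, lt_of_lt_of_le ht.2 hab⟩
  have hNl : Nsum l = N := by
    rw [hNsum, hNdef]
    apply Finset.sum_congr ?_ (fun _ _ => rfl)
    ext t
    simp [t.isLt]
  have hNsucc : ∀ k : Fin l, Nsum ((k:ℕ)+1) = Nsum (k:ℕ) + n k := by
    intro k
    rw [hNsum, hNsum, Finset.sum_filter, Finset.sum_filter]
    have key : ∀ t : Fin l, (if (t:ℕ) < (k:ℕ)+1 then n t else 0)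
        = (if (t:ℕ) < (k:ℕ) then n t else 0) + (if t = k then n t else 0) := by
      intro t
      by_cases h2 : t = k
      · subst h2; simp
      · have hne : (t:ℕ) ≠ (k:ℕ) := fun hh => h2 (Fin.ext hh)
        by_cases h3 : (t:ℕ) < (k:ℕ)
        · rw [if_pos (by omega), if_pos h3, if_neg h2]; omega
        · rw [if_neg (by omega), if_neg h3, if_neg h2]
    rw [Finset.sum_congr rfl (fun t _ => key t), Finset.sum_add_distrib,
      Finset.sum_ite_eq' Finset.univ k]
    simp
  have hBN : ∀ k : Fin l, Nsum (k:ℕ) + n k ≤ N := by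
    intro k
    rw [← hNsucc k, ← hNl]
    exact hNmono _ _ k.isLt
  have hS0 : ∀ ν h', Ssum ν 0 h' = 0 := by
    intro ν h'
    rw [hSsum]
    simp
  -- step formula
  have step : ∀ ν (h' : ℤ) (j : Fin N), Ssum ν ((j:ℕ)+1) h' = Ssum ν (j:ℕ) h' +
      (if (-1:ℤ)^(p j) * (ν j + ρ j) ≤ h' then (-1:ℤ)^(p j) else 0) := by
    intro ν h' j
    rw [hSsum, hSsum, Finset.sum_filter, Finset.sum_filter]
    have key : ∀ i : Fin N,
        (if ((i:ℕ) < (j:ℕ)+1 ∧ (-1:ℤ)^(p i) * (ν i + ρ i) ≤ h') then (-1:ℤ)^(p i) else 0)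
        = (if ((i:ℕ) < (j:ℕ) ∧ (-1:ℤ)^(p i) * (ν i + ρ i) ≤ h') then (-1:ℤ)^(p i) else 0)
          + (if i = j then (if (-1:ℤ)^(p i) * (ν i + ρ i) ≤ h' then (-1:ℤ)^(p i) else 0) else 0) := by
      intro i
      by_cases h2 : i = j
      · subst h2
        by_cases hP : (-1:ℤ)^(p i) * (ν i + ρ i) ≤ h'
        · rw [if_pos ⟨by omega, hP⟩, if_neg (by omega), if_pos rfl, if_pos hP]; ring
        · rw [if_neg (by tauto), if_neg (by tauto), if_pos rfl, if_neg hP]; ring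
      · have hne : (i:ℕ) ≠ (j:ℕ) := fun hh => h2 (Fin.ext hh)
        rw [if_neg h2]
        by_cases h3 : (i:ℕ) < (j:ℕ)
        · by_cases hP : (-1:ℤ)^(p i) * (ν i + ρ i) ≤ h'
          · rw [if_pos ⟨by omega, hP⟩, if_pos ⟨h3, hP⟩]; ring
          · rw [if_neg (by tauto), if_neg (by tauto)]; ring
        · rw [if_neg (fun hcon => absurd hcon.1 (by omega)),
            if_neg (fun hcon => absurd hcon.1 (by omega))]
          ring
    rw [Finset.sum_congr rfl (fun i _ => key i), Finset.sum_add_distrib,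
      Finset.sum_ite_eq' Finset.univ j]
    simp
  -- unfolded membership in Lam
  have hLam' : ∀ ν, ν ∈ Lam → ∀ (k : Fin l) (i j : Fin N), (j:ℕ) = (i:ℕ) + 1 →
      Nsum (k:ℕ) ≤ (i:ℕ) → (j:ℕ) < Nsum (k:ℕ) + n k →
      0 < (-1:ℤ)^(c k) * ((-1:ℤ)^(p i) * (ν i + ρ i) - (-1:ℤ)^(p j) * (ν j + ρ j)) := by
    intro ν hν
    rw [hLam] at hν
    exact hν
  -- existence of a block containing any prefix length
  have hexists : ∀ j : ℕ, j ≤ N → ∃ k : Fin l, Nsum (k:ℕ) ≤ j ∧ j ≤ Nsum ((k:ℕ)+1) := by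
    intro j hj
    obtain ⟨K, hKdef⟩ : ∃ K, K = Nat.findGreatest (fun k => Nsum k ≤ j) (l-1) := ⟨_, rfl⟩
    have hK1 : Nsum K ≤ j := by
      rw [hKdef]
      exact Nat.findGreatest_spec (P := fun k => Nsum k ≤ j) (m := 0) (by omega)
        (show Nsum 0 ≤ j by rw [hNsum0]; omega)
    have hKl : K ≤ l - 1 := by rw [hKdef]; exact Nat.findGreatest_le _
    refine ⟨⟨K, by omega⟩, hK1, ?_⟩
    by_cases hKe : K = l - 1
    · show j ≤ Nsum (K + 1)
      rw [show K + 1 = l by omega, hNl]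
      exact hj
    · show j ≤ Nsum (K + 1)
      have hb : K + 1 ≤ l - 1 := by omega
      rw [hKdef] at hb
      have hng : ¬ Nsum (K+1) ≤ j := by
        rw [hKdef]
        exact Nat.findGreatest_is_greatest (P := fun k => Nsum k ≤ j) (Nat.lt_succ_self _) hb
      omega
  -- the main per-block comparison
  have blockcmp : ∀ (k : Fin l) (h' : ℤ) (j : ℕ), Nsum (k:ℕ) ≤ j → j ≤ Nsum (k:ℕ) + n k →
      Ssum mu (Nsum (k:ℕ)) h' ≤ Ssum lam (Nsum (k:ℕ)) h' →
      Ssum mu (Nsum (k:ℕ) + n k) h' ≤ Ssum lam (Nsum (k:ℕ) + n k) h' →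
      Ssum mu j h' ≤ Ssum lam j h' := by
    intro k h' j hjA hjB hA hB
    have hBN' : Nsum (k:ℕ) + n k ≤ N := hBN k
    -- monotonicity of ν + ρ inside the block
    have mono : ∀ ν, ν ∈ Lam → ∀ (d : ℕ) (i j : Fin N), (j:ℕ) = (i:ℕ) + d →
        Nsum (k:ℕ) ≤ (i:ℕ) → (j:ℕ) < Nsum (k:ℕ) + n k →
        ν j + ρ j ≤ ν i + ρ i := by
      intro ν hν d
      induction d with
      | zero =>
        intro i j hd _ _
        have : j = i := Fin.ext (by omega)
        rw [this]
      | succ d ih =>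
        intro i j hd hA' hB'
        have hmN : (i:ℕ) + d < N := by omega
        set m : Fin N := ⟨(i:ℕ) + d, hmN⟩ with hmdef
        have hmval : (m:ℕ) = (i:ℕ) + d := rfl
        have h1 : ν m + ρ m ≤ ν i + ρ i := ih i m rfl hA' (by omega)
        have hpm : p m = c k := hp m k (by omega) (by omega)
        have hpj : p j = c k := hp j k (by omega) hB'
        have hcons := hLam' ν hν k m j (by omega) (by omega) hB'
        rw [hpm, hpj] at hcons
        have hsq : (-1:ℤ)^(c k) * (-1:ℤ)^(c k) = 1 := by
          rw [← pow_add]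
          exact (neg_one_pow_eq_one_iff_even (by norm_num)).mpr (Even.add_self _)
        have hexp : (-1:ℤ)^(c k) * ((-1:ℤ)^(c k) * (ν m + ρ m) - (-1:ℤ)^(c k) * (ν j + ρ j))
            = (ν m + ρ m) - (ν j + ρ j) := by
          rw [mul_sub, ← mul_assoc, ← mul_assoc, hsq]
          ring
        rw [hexp] at hcons
        linarith
    -- in-block step formula
    have stepblk : ∀ ν (m : ℕ) (hm1 : Nsum (k:ℕ) ≤ m) (hm2 : m < Nsum (k:ℕ) + n k),
        Ssum ν (m+1) h' = Ssum ν m h' +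
          (if (-1:ℤ)^(c k) * (ν ⟨m, by omega⟩ + ρ ⟨m, by omega⟩) ≤ h'
           then (-1:ℤ)^(c k) else 0) := by
      intro ν m hm1 hm2
      have hpm : p ⟨m, by omega⟩ = c k := hp ⟨m, by omega⟩ k hm1 hm2
      have h0 := step ν h' ⟨m, by omega⟩
      rw [hpm] at h0
      exact h0
    rcases Nat.le_one_iff_eq_zero_or_eq_one.mp (hc k) with hck | hck
    · -- c k = 0 : use s = 0, t = 1
      have hw : (-1:ℤ)^(c k) = 1 := by rw [hck]; norm_num
      refine combine (fun m => Ssum lam m h') (fun m => Ssum mu m h') 0 1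
        (Nsum (k:ℕ)) (Nsum (k:ℕ) + n k) ?_ ?_ ?_ ?_ hA hB j hjA hjB
      · intro m h1 h2
        show Ssum mu (m+1) h' = Ssum mu m h' + 0 ∨ Ssum mu (m+1) h' = Ssum mu m h' + 1
        have hs := stepblk mu m h1 h2
        simp only [hw, one_mul] at hs
        split_ifs at hs
        · right; exact hs
        · left; exact hs
      · intro i j' h1 h2 h3 hstep
        show Ssum mu (j'+1) h' = Ssum mu j' h' + 1
        have hstep' : Ssum mu (i+1) h' = Ssum mu i h' + 1 := hstep
        have hsi := stepblk mu i h1 (by omega)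
        have hsj := stepblk mu j' (by omega) h3
        simp only [hw, one_mul] at hsi hsj
        split_ifs at hsi with hci
        · have hmono' : mu ⟨j', by omega⟩ + ρ ⟨j', by omega⟩
              ≤ mu ⟨i, by omega⟩ + ρ ⟨i, by omega⟩ :=
            mono mu hmu (j' - i) ⟨i, by omega⟩ ⟨j', by omega⟩
              (by omega : (j' : ℕ) = i + (j' - i)) h1 h3
          rw [hsj, if_pos (le_trans hmono' hci)]
        · exfalso; omega
      · intro m h1 h2
        show Ssum lam m h' + 0 ≤ Ssum lam (m+1) h'
        have hs := stepblk lam m h1 h2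
        simp only [hw, one_mul] at hs
        split_ifs at hs <;> omega
      · intro m h1 h2
        show Ssum lam (m+1) h' ≤ Ssum lam m h' + 1
        have hs := stepblk lam m h1 h2
        simp only [hw, one_mul] at hs
        split_ifs at hs <;> omega
    · -- c k = 1 : use s = -1, t = 0
      have hw : (-1:ℤ)^(c k) = -1 := by rw [hck]; norm_num
      refine combine (fun m => Ssum lam m h') (fun m => Ssum mu m h') (-1) 0
        (Nsum (k:ℕ)) (Nsum (k:ℕ) + n k) ?_ ?_ ?_ ?_ hA hB j hjA hjB
      · intro m h1 h2
        show Ssum mu (m+1) h' = Ssum mu m h' + -1 ∨ Ssum mu (m+1) h' = Ssum mu m h' + 0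
        have hs := stepblk mu m h1 h2
        simp only [hw] at hs
        split_ifs at hs
        · left; exact hs
        · right; exact hs
      · intro i j' h1 h2 h3 hstep
        show Ssum mu (j'+1) h' = Ssum mu j' h' + 0
        have hstep' : Ssum mu (i+1) h' = Ssum mu i h' + 0 := hstep
        have hsi := stepblk mu i h1 (by omega)
        have hsj := stepblk mu j' (by omega) h3
        simp only [hw] at hsi hsj
        split_ifs at hsi with hci
        · exfalso; omega
        · have hmono' : mu ⟨j', by omega⟩ + ρ ⟨j', by omega⟩
              ≤ mu ⟨i, by omega⟩ + ρ ⟨i, by omega⟩ :=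
            mono mu hmu (j' - i) ⟨i, by omega⟩ ⟨j', by omega⟩
              (by omega : (j' : ℕ) = i + (j' - i)) h1 h3
          rw [hsj, if_neg (by push_neg at hci ⊢; linarith)]
      · intro m h1 h2
        show Ssum lam m h' + -1 ≤ Ssum lam (m+1) h'
        have hs := stepblk lam m h1 h2
        simp only [hw] at hs
        split_ifs at hs <;> omega
      · intro m h1 h2
        show Ssum lam (m+1) h' ≤ Ssum lam m h' + 0
        have hs := stepblk lam m h1 h2
        simp only [hw] at hs
        split_ifs at hs <;> omega
  -- now the equivalence
  constructor
  · intro hb h' k hk1 hkl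
    rw [hbruhat] at hb
    by_cases h0 : Nsum k = 0
    · constructor
      · rw [h0, hS0, hS0]
      · intro hkeq
        exfalso
        rw [hkeq, hNl] at h0
        omega
    · have hkN : Nsum k ≤ N := by rw [← hNl]; exact hNmono _ _ hkl
      have := hb h' (Nsum k) (by omega) hkN
      exact ⟨this.1, fun hkeq => this.2 (by rw [hkeq, hNl])⟩
  · intro H
    rw [hbruhat]
    intro h' j hj1 hjN
    have hEndIneq : ∀ k : ℕ, k ≤ l → Ssum mu (Nsum k) h' ≤ Ssum lam (Nsum k) h' := by
      intro k hkl
      by_cases h0 : k = 0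
      · rw [h0, hNsum0, hS0, hS0]
      · exact (H h' k (by omega) hkl).1
    constructor
    · obtain ⟨k, hk1, hk2⟩ := hexists j hjN
      rw [hNsucc k] at hk2
      have eA := hEndIneq (k:ℕ) (le_of_lt k.isLt)
      have eB := hEndIneq ((k:ℕ)+1) k.isLt
      rw [hNsucc k] at eB
      exact blockcmp k h' j hk1 hk2 eA eB
    · intro hjeq
      have := (H h' l hl le_rfl).2 rfl
      rw [hNl] at this
      rw [hjeq]
      exact this
end

section
/- Define C : ℤ^N → ℤ by C(λ) := Σ_{r=1}^N (−1)^{p_r} λ_r² + Σ_{1≤r<s≤N} ((−1)^{p_s} λ_r − (−1)^{p_r} λ_s); this is the scalar by which the Casimir element c = Σ_{r,s} (−1)^{p_s} e_{r,s} e_{s,r} of the general linear Lie superalgebra acts on a highest-weight module of highest weight λ. Let m := #{r : p_r = 1} and n := #{r : p_r = 0}. Then for every λ ∈ ℤ^N and every 1 ≤ a ≤ N, C(λ + e_a) − C(λ) − n + m = 2j, where j := (λ+ρ, δ_a) if p_a = 0 and j := (λ+ρ, δ_a) − 1 if p_a = 1. -/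
/-- the Casimir scalar identity: for every `λ ∈ ℤ^N` and `1 ≤ a ≤ N`,
`C(λ + e_a) − C(λ) − n + m = 2j`, where `j = (λ+ρ, δ_a)` if `p_a = 0` and
`j = (λ+ρ, δ_a) − 1` if `p_a = 1`. -/
theorem stmt_17
    (N : ℕ) (hN : 1 ≤ N) (p : Fin N → ℕ) (hp : ∀ i, p i ≤ 1)
    (ρ : Fin N → ℤ)
    (hρ : ∀ j : Fin N, ρ j = -(∑ i ∈ Finset.univ.filter (fun i : Fin N => i < j),
        (-1 : ℤ) ^ (p i + p j)) - (if p j = 1 then 1 else 0))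
    (m n : ℕ)
    (hm : m = (Finset.univ.filter (fun i : Fin N => p i = 1)).card)
    (hn : n = (Finset.univ.filter (fun i : Fin N => p i = 0)).card)
    (C : (Fin N → ℤ) → ℤ)
    (hC : ∀ lam, C lam = (∑ r : Fin N, (-1 : ℤ) ^ (p r) * (lam r) ^ 2) +
      ∑ q ∈ Finset.univ.filter (fun q : Fin N × Fin N => q.1 < q.2),
        ((-1 : ℤ) ^ (p q.2) * lam q.1 - (-1 : ℤ) ^ (p q.1) * lam q.2)) :
    ∀ (lam : Fin N → ℤ) (a : Fin N),
      C (fun r => lam r + (if r = a then 1 else 0)) - C lam - (n : ℤ) + (m : ℤ)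
        = 2 * (if p a = 1 then (-1 : ℤ) ^ (p a) * (lam a + ρ a) - 1
            else (-1 : ℤ) ^ (p a) * (lam a + ρ a)) := by
  intro lam a
  set ε : Fin N → ℤ := fun i => (-1 : ℤ) ^ (p i) with hε
  set A : ℤ := ∑ i ∈ Finset.univ.filter (fun i : Fin N => i < a), ε i with hA
  set B : ℤ := ∑ i ∈ Finset.univ.filter (fun i : Fin N => a < i), ε i with hB
  -- diagonal difference
  have h1 : (∑ r : Fin N, ε r * (lam r + (if r = a then (1:ℤ) else 0)) ^ 2)
      - (∑ r : Fin N, ε r * (lam r) ^ 2) = ε a * (2 * lam a + 1) := by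
    rw [← Finset.sum_sub_distrib]
    rw [Fintype.sum_eq_single a (fun r hr => by simp [hr])]
    simp; ring
  -- cross-term difference
  have hfilt : ∀ f : Fin N × Fin N → ℤ,
      (∑ q ∈ Finset.univ.filter (fun q : Fin N × Fin N => q.1 < q.2), f q)
        = ∑ r : Fin N, ∑ s : Fin N, if r < s then f (r, s) else 0 := by
    intro f
    rw [Finset.sum_filter, Fintype.sum_prod_type]
  have h2 : (∑ q ∈ Finset.univ.filter (fun q : Fin N × Fin N => q.1 < q.2),
        (ε q.2 * (lam q.1 + (if q.1 = a then (1:ℤ) else 0))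
          - ε q.1 * (lam q.2 + (if q.2 = a then (1:ℤ) else 0))))
      - (∑ q ∈ Finset.univ.filter (fun q : Fin N × Fin N => q.1 < q.2),
        (ε q.2 * lam q.1 - ε q.1 * lam q.2)) = B - A := by
    rw [← Finset.sum_sub_distrib]
    have : ∀ q ∈ Finset.univ.filter (fun q : Fin N × Fin N => q.1 < q.2),
        (ε q.2 * (lam q.1 + (if q.1 = a then (1:ℤ) else 0))
          - ε q.1 * (lam q.2 + (if q.2 = a then (1:ℤ) else 0)))
        - (ε q.2 * lam q.1 - ε q.1 * lam q.2)
        = ε q.2 * (if q.1 = a then (1:ℤ) else 0)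
          - ε q.1 * (if q.2 = a then (1:ℤ) else 0) := by
      intro q _; ring
    rw [Finset.sum_congr rfl this, Finset.sum_sub_distrib, hfilt, hfilt]
    have hB' : (∑ r : Fin N, ∑ s : Fin N,
        if r < s then ε s * (if r = a then (1:ℤ) else 0) else 0) = B := by
      rw [Fintype.sum_eq_single a (fun r hr => by simp [hr])]
      simp [hB, Finset.sum_filter]
    have hA' : (∑ r : Fin N, ∑ s : Fin N,
        if r < s then ε r * (if s = a then (1:ℤ) else 0) else 0) = A := by
      have key : ∀ r : Fin N, (∑ s : Fin N,
          if r < s then ε r * (if s = a then (1:ℤ) else 0) else 0)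
          = if r < a then ε r else 0 := by
        intro r
        rw [Fintype.sum_eq_single a (fun s hs => by simp [hs])]
        by_cases h : r < a <;> simp [h]
      rw [Finset.sum_congr rfl (fun r _ => key r), hA, Finset.sum_filter]
    rw [hB', hA']
  -- total sign sum equals n - m
  have hT : (∑ i : Fin N, ε i) = (n : ℤ) - (m : ℤ) := by
    rw [hm, hn, ← Finset.sum_filter_add_sum_filter_not Finset.univ (fun i => p i = 0)]
    have e0 : (∑ i ∈ Finset.univ.filter (fun i : Fin N => p i = 0), ε i)
        = ((Finset.univ.filter (fun i : Fin N => p i = 0)).card : ℤ) := by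
      have : ∀ i ∈ Finset.univ.filter (fun i : Fin N => p i = 0), ε i = 1 := by
        intro i hi
        simp only [Finset.mem_filter] at hi
        simp [hε, hi.2]
      rw [Finset.sum_congr rfl this, Finset.sum_const, nsmul_eq_mul, mul_one]
    have hset : Finset.univ.filter (fun i : Fin N => ¬ p i = 0)
        = Finset.univ.filter (fun i : Fin N => p i = 1) := by
      apply Finset.filter_congr
      intro i _
      have := hp i
      constructor <;> omega
    have e1 : (∑ i ∈ Finset.univ.filter (fun i : Fin N => ¬ p i = 0), ε i)
        = -((Finset.univ.filter (fun i : Fin N => p i = 1)).card : ℤ) := by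
      rw [hset]
      have : ∀ i ∈ Finset.univ.filter (fun i : Fin N => p i = 1), ε i = -1 := by
        intro i hi
        simp only [Finset.mem_filter] at hi
        simp [hε, hi.2]
      rw [Finset.sum_congr rfl this, Finset.sum_const, nsmul_eq_mul]
      ring
    rw [e0, e1]; ring
  -- total sign sum splits as A + ε a + B
  have hsplit : (∑ i : Fin N, ε i) = A + ε a + B := by
    have key : ∀ i : Fin N, ε i = (if i < a then ε i else 0)
        + (if i = a then ε i else 0) + (if a < i then ε i else 0) := by
      intro i
      rcases lt_trichotomy i a with h | h | h
      · simp [h, ne_of_lt h, asymm h]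
      · subst h; simp
      · simp [h, (ne_of_lt h).symm, asymm h]
    rw [Finset.sum_congr rfl (fun i _ => key i)]
    rw [Finset.sum_add_distrib, Finset.sum_add_distrib]
    simp [Finset.sum_ite_eq', hA, hB, Finset.sum_filter]
  -- rho at a
  have hρa : ρ a = -(((-1:ℤ) ^ (p a)) * A) - (if p a = 1 then 1 else 0) := by
    rw [hρ a]
    congr 1
    rw [hA, Finset.mul_sum, neg_inj]
    refine Finset.sum_congr rfl fun i _ => ?_
    rw [pow_add, mul_comm]
  rw [hC, hC]
  simp only [show ∀ i : Fin N, ((-1:ℤ)) ^ (p i) = ε i from fun _ => rfl]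
  rw [hρa]
  rcases Nat.le_one_iff_eq_zero_or_eq_one.mp (hp a) with h | h
  · have hεa : ε a = 1 := by simp [hε, h]
    simp only [h, hεa, show ((0:ℕ) = 1) = False by simp, if_false] at h1 h2 ⊢
    simp only [Finset.sum_sub_distrib] at h2 ⊢
    linarith [h1, h2, hT, hsplit, hεa]
  · have hεa : ε a = -1 := by simp [hε, h]
    simp only [h, hεa, if_true, eq_self_iff_true] at h1 h2 ⊢
    simp only [Finset.sum_sub_distrib] at h2 ⊢
    linarith [h1, h2, hT, hsplit, hεa]
end
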